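/- arXiv:1902.00503 — 4 statements merged into one kernel-verified Lean document; each statement's English description precedes it below -/
import Mathlib

section
/- The infinite word x_5 contains a factor with exponent exactly 3/2; in fact there exist natural numbers i, n ≥ 1 and p ≥ 1 with 2n = 3p such that x_5[i+j] = x_5[i+j+p] for all j with 0 ≤ j < n − p (for example i = 23, n = 6, p = 4, giving the factor 403240). -/
/-- The characteristic Sturmian word with slope `α = √2 - 1`, indexed from 1:
`c_α[n] = ⌊α(n+1)⌋ - ⌊αn⌋`. -/
noncomputable def calpha (n : ℕ) : ℤ :=
  ⌊(Real.sqrt 2 - 1) * ((n : ℝ) + 1)⌋ - ⌊(Real.sqrt 2 - 1) * (n : ℝ)⌋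

/-- `zcount m` = number of indices `1 ≤ j ≤ m` with `c_α[j] = 0`. -/
noncomputable def zcount (m : ℕ) : ℕ :=
  ((Finset.Icc 1 m).filter fun j => calpha j = 0).card

/-- `ocount m` = number of indices `1 ≤ j ≤ m` with `c_α[j] = 1`. -/
noncomputable def ocount (m : ℕ) : ℕ :=
  ((Finset.Icc 1 m).filter fun j => calpha j = 1).card

/-- The infinite balanced word `x₅` over `{0,1,2,3,4}`, indexed from 0, obtained from
`c_α` by replacing the 0's by `(0102)^ω` and the 1's by `(34)^ω`. -/
noncomputable def x5 (i : ℕ) : ℕ :=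
  if calpha (i + 1) = 0 then [0, 1, 0, 2].getD ((zcount (i + 1) - 1) % 4) 0
  else [3, 4].getD ((ocount (i + 1) - 1) % 2) 0



/-!
Since `0 < √2 - 1 < 1`, every letter of `c_α` is `0` or `1`, so the number of `1`s among the
first `m` letters telescopes to `⌊α(m+1)⌋`. As `⌊(√2 - 1)n⌋ = ⌊√(2n²)⌋ - n` is an integer
square root, every letter of `x₅` can be computed exactly; the factor of length 6 at position 23
is `403240`, which has period 4.
-/

open Finset

lemma Int.floor_add_sub_floor_eq_zero_or_one {x a : ℝ} (ha₀ : 0 ≤ a) (ha₁ : a < 1) :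
    ⌊x + a⌋ - ⌊x⌋ = 0 ∨ ⌊x + a⌋ - ⌊x⌋ = 1 := by
  have hle : ⌊x⌋ ≤ ⌊x + a⌋ := Int.floor_mono (by linarith)
  have hlt : ⌊x + a⌋ < ⌊x⌋ + 2 := by
    rw [Int.floor_lt]
    push_cast
    linarith [Int.lt_floor_add_one x]
  omega

lemma sqrt_two_sub_one_mem_Ico : √2 - 1 ∈ Set.Ico (0 : ℝ) 1 := by
  have h := Real.sq_sqrt (show (0 : ℝ) ≤ 2 by norm_num)
  constructor <;> nlinarith [Real.sqrt_nonneg 2]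

lemma calpha_eq_zero_or_one (n : ℕ) : calpha n = 0 ∨ calpha n = 1 := by
  rw [calpha, mul_add_one]
  exact Int.floor_add_sub_floor_eq_zero_or_one sqrt_two_sub_one_mem_Ico.1
    sqrt_two_sub_one_mem_Ico.2

lemma sum_calpha_Icc (m : ℕ) : ∑ j ∈ Icc 1 m, calpha j = ⌊(√2 - 1) * ((m : ℝ) + 1)⌋ := by
  induction m with
  | zero => simpa using (Int.floor_eq_zero_iff.2 sqrt_two_sub_one_mem_Ico).symm
  | succ m ih =>
    rw [sum_Icc_succ_top (by omega), ih, calpha]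
    push_cast
    ring

lemma ocount_eq_floor (m : ℕ) : (ocount m : ℤ) = ⌊(√2 - 1) * ((m : ℝ) + 1)⌋ := by
  rw [← sum_calpha_Icc, ocount, card_filter]
  push_cast
  refine sum_congr rfl fun j _ => ?_
  rcases calpha_eq_zero_or_one j with h | h <;> simp [h]

lemma zcount_add_ocount (m : ℕ) : zcount m + ocount m = m := by
  have h : {j ∈ Icc 1 m | calpha j = 1} = {j ∈ Icc 1 m | ¬calpha j = 0} :=
    filter_congr fun j _ => by rcases calpha_eq_zero_or_one j with h | h <;> simp [h]
  rw [zcount, ocount, h, card_filter_add_card_filter_not, Nat.card_Icc]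
  omega

lemma floor_sqrt_two_sub_one_mul_natCast (n : ℕ) :
    ⌊(√2 - 1) * (n : ℝ)⌋ = Nat.sqrt (2 * n ^ 2) - n := by
  have h : (√2 - 1) * (n : ℝ) = √((2 * n ^ 2 : ℕ) : ℝ) - n := by
    push_cast
    rw [Real.sqrt_mul' _ (by positivity), Real.sqrt_sq (by positivity)]
    ring
  rw [h, Int.floor_sub_natCast, Real.floor_real_sqrt_eq_nat_sqrt]

lemma calpha_eq_natSqrt (n : ℕ) :
    calpha n = Nat.sqrt (2 * (n + 1) ^ 2) - Nat.sqrt (2 * n ^ 2) - 1 := by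
  rw [calpha, ← Nat.cast_add_one, floor_sqrt_two_sub_one_mul_natCast,
    floor_sqrt_two_sub_one_mul_natCast]
  push_cast
  ring

lemma ocount_eq_natSqrt (m : ℕ) : ocount m = Nat.sqrt (2 * (m + 1) ^ 2) - (m + 1) := by
  have h := ocount_eq_floor m
  rw [← Nat.cast_add_one, floor_sqrt_two_sub_one_mul_natCast] at h
  omega

lemma zcount_eq_natSqrt (m : ℕ) : zcount m = 2 * m + 1 - Nat.sqrt (2 * (m + 1) ^ 2) := by
  have h := ocount_eq_floor m
  rw [← Nat.cast_add_one, floor_sqrt_two_sub_one_mul_natCast] at h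
  have := zcount_add_ocount m
  omega

/-- `x₅` contains a factor of exponent exactly `3/2`: there are `i`, `n ≥ 1`, `p ≥ 1`
with `2n = 3p` such that the length-`n` factor of `x₅` at position `i` has period `p`. -/
theorem x5_exponent_three_halves_attained :
    ∃ i n p : ℕ, 1 ≤ n ∧ 1 ≤ p ∧ 2 * n = 3 * p ∧
      ∀ j, j + p < n → x5 (i + j) = x5 (i + j + p) := by
  refine ⟨23, 6, 4, by norm_num, by norm_num, by norm_num, fun j hj => ?_⟩
  obtain rfl | rfl : j = 0 ∨ j = 1 := by omega
  all_goals
    simp only [x5, calpha_eq_natSqrt, zcount_eq_natSqrt, ocount_eq_natSqrt]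
    norm_num
end

section
/- Every natural number N has a unique canonical Pell representation: there exists a unique finitely supported sequence of digits (d_i)_{i ≥ 0} such that N = Σ_{i ≥ 0} d_i · P_{i+1}, d_0 ∈ {0,1}, d_i ∈ {0,1,2} for all i ≥ 1, and whenever d_i = 2 for some i ≥ 1 then d_{i−1} = 0. -/
/-- The Pell numbers: `P 0 = 0`, `P 1 = 1`, `P (n+2) = 2 * P (n+1) + P n`. -/
def pell : ℕ → ℕ
  | 0 => 0
  | 1 => 1
  | n + 2 => 2 * pell (n + 1) + pell n

namespace PellRep

lemma pell_pos : ∀ n, 0 < pell (n + 1)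
  | 0 => by simp [pell]
  | 1 => by simp [pell]
  | n + 2 => by
    have h1 := pell_pos (n + 1)
    have h : pell (n + 2 + 1) = 2 * pell (n + 1 + 1) + pell (n + 1) := rfl
    omega

lemma succ_le_pell : ∀ n, n + 1 ≤ pell (n + 1)
  | 0 => by simp [pell]
  | 1 => by simp [pell]
  | n + 2 => by
    have h1 := succ_le_pell (n + 1)
    have h2 := pell_pos n
    have h : pell (n + 2 + 1) = 2 * pell (n + 1 + 1) + pell (n + 1) := rfl
    omega

/-- Validity of a digit function. -/
def Ok (d : ℕ → ℕ) : Prop :=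
  d 0 ≤ 1 ∧ (∀ i, d i ≤ 2) ∧ (∀ i, 1 ≤ i → d i = 2 → d (i - 1) = 0)

/-- Partial value. -/
def S (d : ℕ → ℕ) (n : ℕ) : ℕ := ∑ i ∈ Finset.range n, d i * pell (i + 1)

lemma S_succ (d : ℕ → ℕ) (n : ℕ) : S d (n + 1) = S d n + d n * pell (n + 1) :=
  Finset.sum_range_succ _ _

lemma S_congr {d e : ℕ → ℕ} (n : ℕ) (h : ∀ i < n, d i = e i) : S d n = S e n :=
  Finset.sum_congr rfl fun i hi => by rw [h i (Finset.mem_range.mp hi)]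

lemma S_extend {d : ℕ → ℕ} {n m : ℕ} (h : ∀ i, n ≤ i → d i = 0) (hnm : n ≤ m) :
    S d m = S d n := by
  unfold S
  rw [← Finset.sum_range_add_sum_Ico _ hnm]
  have hz : ∀ i ∈ Finset.Ico n m, d i * pell (i + 1) = 0 := by
    intro i hi
    rw [Finset.mem_Ico] at hi
    rw [h i hi.1]; ring
  rw [Finset.sum_eq_zero hz, add_zero]

/-- The key bound: any valid digit string read below `n` has value `< pell (n+1)`. -/
lemma S_lt (d : ℕ → ℕ) (hd : Ok d) : ∀ n, S d n < pell (n + 1) := by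
  intro n
  induction n using Nat.strong_induction_on with
  | _ n ih =>
    match n with
    | 0 => simpa [S] using pell_pos 0
    | n + 1 =>
      rw [S_succ]
      rcases hd with ⟨h0, h2, hc⟩
      have hdn := h2 n
      rcases Nat.lt_or_ge (d n) 2 with h | h
      · have h1 := ih n (Nat.lt_succ_self n)
        have hpe : pell (n + 1 + 1) = 2 * pell (n + 1) + pell n := rfl
        have hmul : d n * pell (n + 1) ≤ 1 * pell (n + 1) :=
          Nat.mul_le_mul_right _ (by omega)
        omega
      · have hdn2 : d n = 2 := le_antisymm hdn h
        have hn1 : 1 ≤ n := by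
          rcases Nat.eq_zero_or_pos n with rfl | h'
          · omega
          · exact h'
        obtain ⟨m, rfl⟩ : ∃ m, n = m + 1 := ⟨n - 1, by omega⟩
        have hprev : d m = 0 := by
          have := hc (m + 1) (by omega) hdn2
          simpa using this
        have h1 := ih m (by omega)
        have hS : S d (m + 1) = S d m := by rw [S_succ, hprev]; ring
        rw [hS, hdn2]
        have hpe : pell (m + 1 + 1 + 1) = 2 * pell (m + 1 + 1) + pell (m + 1) := rfl
        omega

lemma Ok_zero : Ok (fun _ => 0) := by
  refine ⟨by simp, by simp, by simp⟩

/-- Find the largest `k` with `pell (k+1) ≤ N`. -/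
lemma find_top : ∀ n N, 1 ≤ N → N < pell (n + 1) →
    ∃ k, k + 1 ≤ n ∧ pell (k + 1) ≤ N ∧ N < pell (k + 2) := by
  intro n
  induction n with
  | zero => intro N h1 h2; simp [pell] at h2; omega
  | succ n ih =>
    intro N h1 h2
    rcases Nat.lt_or_ge N (pell (n + 1)) with h | h
    · obtain ⟨k, hk1, hk2, hk3⟩ := ih N h1 h
      exact ⟨k, by omega, hk2, hk3⟩
    · exact ⟨n, le_rfl, h, h2⟩

/-- Existence. -/
lemma exists_rep : ∀ N n, N < pell (n + 1) →
    ∃ d : ℕ → ℕ, Ok d ∧ (∀ i, n ≤ i → d i = 0) ∧ S d n = N := by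
  intro N
  induction N using Nat.strong_induction_on with
  | _ N ih =>
    intro n hNn
    rcases Nat.eq_zero_or_pos N with rfl | hN1
    · refine ⟨fun _ => 0, Ok_zero, fun _ _ => rfl, by simp [S]⟩
    obtain ⟨k, hkn, hk1, hk2⟩ := find_top n N hN1 hNn
    have hp1 : 0 < pell (k + 1) := pell_pos k
    rcases Nat.lt_or_ge N (2 * pell (k + 1)) with hc | hc
    · -- digit 1 at position k
      set M := N - pell (k + 1) with hM
      have hMlt : M < pell (k + 1) := by omega
      have hMN : M < N := by omega
      obtain ⟨e, hOk, hsup, hSe⟩ := ih M hMN k hMlt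
      set f := Function.update e k 1 with hf
      have hfsup : ∀ i, k + 1 ≤ i → f i = 0 := by
        intro i hi
        rw [hf, Function.update_of_ne (by omega)]
        exact hsup i (by omega)
      refine ⟨f, ?_, fun i hi => hfsup i (by omega), ?_⟩
      · rcases hOk with ⟨h0, h2, hcc⟩
        refine ⟨?_, ?_, ?_⟩
        · rcases Nat.eq_zero_or_pos k with rfl | hk0
          · simp [hf, Function.update]
          · rw [hf, Function.update_of_ne (by omega)]; exact h0
        · intro i
          rcases eq_or_ne i k with rfl | hik
          · simp [hf, Function.update]
          · rw [hf, Function.update_of_ne hik]; exact h2 i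
        · intro i hi1 hi2
          have hik : i ≠ k := by
            intro h; rw [h, hf] at hi2; simp [Function.update] at hi2
          rw [hf, Function.update_of_ne hik] at hi2
          have hilt : i < k := by
            by_contra h
            have := hsup i (by omega)
            omega
          have := hcc i hi1 hi2
          rw [hf, Function.update_of_ne (by omega)]
          exact this
      · have h1 : S f (k + 1) = S e k + 1 * pell (k + 1) := by
          rw [S_succ]
          congr 1
          · exact S_congr k fun i hi => by
              rw [hf, Function.update_of_ne (by omega)]
          · rw [hf]; simp [Function.update]
        have h2 : S f n = S f (k + 1) := by
          rw [S_extend hfsup (by omega)]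
        rw [h2, h1, hSe]; omega
    · -- digit 2 at position k
      have hk0 : 1 ≤ k := by
        rcases Nat.eq_zero_or_pos k with rfl | h
        · have e1 : pell (0 + 2) = 2 := rfl
          have e2 : pell (0 + 1) = 1 := rfl
          omega
        · exact h
      obtain ⟨m, rfl⟩ : ∃ m, k = m + 1 := ⟨k - 1, by omega⟩
      set M := N - 2 * pell (m + 1 + 1) with hM
      have hpe : pell (m + 1 + 2) = 2 * pell (m + 1 + 1) + pell (m + 1) := rfl
      have hMlt : M < pell (m + 1) := by omega
      have hMN : M < N := by omega
      obtain ⟨e, hOk, hsup, hSe⟩ := ih M hMN m hMlt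
      set f := Function.update e (m + 1) 2 with hf
      have hfsup : ∀ i, m + 2 ≤ i → f i = 0 := by
        intro i hi
        rw [hf, Function.update_of_ne (by omega)]
        exact hsup i (by omega)
      refine ⟨f, ?_, fun i hi => hfsup i (by omega), ?_⟩
      · rcases hOk with ⟨h0, h2, hcc⟩
        refine ⟨?_, ?_, ?_⟩
        · rw [hf, Function.update_of_ne (by omega)]; exact h0
        · intro i
          rcases eq_or_ne i (m + 1) with rfl | hik
          · simp [hf, Function.update]
          · rw [hf, Function.update_of_ne hik]; exact h2 i
        · intro i hi1 hi2
          rcases eq_or_ne i (m + 1) with rfl | hik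
          · rw [hf, Function.update_of_ne (by omega)]
            simpa using hsup m le_rfl
          · rw [hf, Function.update_of_ne hik] at hi2
            have hilt : i < m := by
              by_contra h
              have := hsup i (by omega)
              omega
            have := hcc i hi1 hi2
            rw [hf, Function.update_of_ne (by omega)]
            exact this
      · have h1 : S f (m + 1 + 1) = S e (m + 1) + 2 * pell (m + 1 + 1) := by
          rw [S_succ]
          congr 1
          · exact S_congr (m + 1) fun i hi => by
              rw [hf, Function.update_of_ne (by omega)]
          · rw [hf]; simp [Function.update]
        have hSe1 : S e (m + 1) = M := by
          rw [S_succ, hsup m le_rfl, hSe]; ring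
        have h2 : S f n = S f (m + 1 + 1) := by
          rw [S_extend hfsup (by omega)]
        rw [h2, h1, hSe1]; omega

/-- Uniqueness. -/
lemma unique_rep : ∀ n (d e : ℕ → ℕ), Ok d → Ok e → S d n = S e n →
    ∀ i < n, d i = e i := by
  intro n
  induction n with
  | zero => intro d e _ _ _ i hi; omega
  | succ n ih =>
    intro d e hd he hS
    have hdb := S_lt d hd n
    have heb := S_lt e he n
    rw [S_succ, S_succ] at hS
    have htop : d n = e n := by
      rcases Nat.lt_trichotomy (d n) (e n) with h | h | h
      · have h1 : (d n + 1) * pell (n + 1) ≤ e n * pell (n + 1) :=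
          Nat.mul_le_mul_right _ (by omega)
        nlinarith
      · exact h
      · have h1 : (e n + 1) * pell (n + 1) ≤ d n * pell (n + 1) :=
          Nat.mul_le_mul_right _ (by omega)
        nlinarith
    have hS' : S d n = S e n := by
      have : d n * pell (n + 1) = e n * pell (n + 1) := by rw [htop]
      omega
    intro i hi
    rcases Nat.lt_or_ge i n with h | h
    · exact ih d e hd he hS' i h
    · have : i = n := by omega
      rw [this]; exact htop

end PellRep

/-- Every natural number has a unique canonical Pell representation: a finitely
supported digit sequence `d` with `N = Σ_i d i · P (i+1)`, `d 0 ≤ 1`, `d i ≤ 2` for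
all `i`, and `d i = 2` (for `i ≥ 1`) implying `d (i-1) = 0`. -/
theorem pell_representation_exists_unique (N : ℕ) :
    ∃! d : ℕ →₀ ℕ,
      (d.sum fun i c => c * pell (i + 1)) = N ∧
      d 0 ≤ 1 ∧
      (∀ i, d i ≤ 2) ∧
      (∀ i, 1 ≤ i → d i = 2 → d (i - 1) = 0) := by
  classical
  have hN : N < pell (N + 1 + 1) :=
    lt_of_lt_of_le (by omega) (PellRep.succ_le_pell (N + 1))
  obtain ⟨d, hOk, hsup, hS⟩ := PellRep.exists_rep N (N + 1) hN
  set n := N + 1 with hn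
  have hsub : ∀ i, d i ≠ 0 → i ∈ Finset.range n := by
    intro i hi
    refine Finset.mem_range.mpr ?_
    by_contra h
    exact hi (hsup i (by omega))
  refine ⟨Finsupp.onFinset (Finset.range n) d hsub, ?_, ?_⟩
  · have hcoe : ∀ i, (Finsupp.onFinset (Finset.range n) d hsub) i = d i := fun i => rfl
    refine ⟨?_, ?_, ?_, ?_⟩
    · rw [Finsupp.onFinset_sum hsub (fun a => by ring)]
      simpa [PellRep.S] using hS
    · rw [hcoe]; exact hOk.1
    · intro i; rw [hcoe]; exact hOk.2.1 i
    · intro i h1 h2; rw [hcoe]; rw [hcoe] at h2; exact hOk.2.2 i h1 h2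
  · rintro D ⟨hDsum, hD0, hD2, hDc⟩
    have hOkD : PellRep.Ok (⇑D) := ⟨hD0, hD2, hDc⟩
    set m := n + (D.support.sup id) + 1 with hm
    have hDsup : ∀ i, m ≤ i → D i = 0 := by
      intro i hi
      by_contra h
      have hmem : i ∈ D.support := Finsupp.mem_support_iff.mpr h
      have := Finset.le_sup (f := id) hmem
      simp only [id] at this
      omega
    have hDS : PellRep.S (⇑D) m = N := by
      rw [← hDsum]
      rw [Finsupp.sum_of_support_subset D (s := Finset.range m)
        (fun i hi => Finset.mem_range.mpr (by
          by_contra h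
          exact Finsupp.mem_support_iff.mp hi (hDsup i (by omega))))
        _ (fun i _ => by ring)]
      rfl
    have hdS : PellRep.S d m = N := by
      rw [PellRep.S_extend hsup (by omega), hS]
    have key := PellRep.unique_rep m (⇑D) d hOkD hOk (by rw [hDS, hdS])
    apply Finsupp.ext
    intro i
    have hcoe : ∀ j, (Finsupp.onFinset (Finset.range n) d hsub) j = d j := fun j => rfl
    rw [hcoe]
    rcases Nat.lt_or_ge i m with h | h
    · exact key i h
    · rw [hDsup i h, hsup i (by omega)]
end

section
/- Let N ≥ 1 and let (d_i) be the canonical Pell representation of N, i.e., N = Σ d_i P_{i+1} with d_0 ∈ {0,1}, d_i ∈ {0,1,2}, and d_i = 2 implying d_{i−1} = 0. Let k be the least index i with d_i ≠ 0 (the number of trailing zeros of the representation). Then c_α[N] = 1 if and only if k is odd, where α = √2 − 1. -/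
/-!
Since `α = √2 - 1` satisfies `α² + 2α = 1`, one has `α P_{i+1} = P_i + (-α)^i α`. Hence, if `d_k`
is the least nonzero digit of `N`, then `α N = M + (-1)^k ε` with `M ∈ ℕ`, `ε = α^{k+1} S` and
`S = Σ_j d_{k+j} (-α)^j`. Digits at most `2` force `d_k - 1 < S < d_k + α ≤ α⁻¹`, so
`0 < ε < α^k`: `α N` lies just above the integer `M` when `k` is even and just below it when `k`
is odd, which makes `⌊α(N+1)⌋ - ⌊αN⌋` equal to `0` or `1` respectively. When `k = 0` the digit
`d_0 ≤ 1` keeps `ε` below `1 - α`, so that adding `α` does not reach `M + 1`.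
-/

open Finset

noncomputable def sqrtTwoSubOne : ℝ := Real.sqrt 2 - 1

local notation "α" => sqrtTwoSubOne

lemma sqrtTwoSubOne_sq_add : α ^ 2 + 2 * α = 1 := by
  have h : Real.sqrt 2 ^ 2 = 2 := Real.sq_sqrt (by norm_num)
  unfold sqrtTwoSubOne
  linear_combination h

lemma sqrtTwoSubOne_pos : 0 < α := sub_pos.mpr Real.one_lt_sqrt_two

lemma sqrtTwoSubOne_lt_one : α < 1 := by
  nlinarith [sqrtTwoSubOne_sq_add, sqrtTwoSubOne_pos]

lemma calpha_eq (n : ℕ) : calpha n = ⌊α * ((n : ℝ) + 1)⌋ - ⌊α * (n : ℝ)⌋ := rfl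

lemma sqrtTwoSubOne_mul_pell_succ (i : ℕ) :
    α * (pell (i + 1) : ℝ) = pell i + (-α) ^ i * α := by
  induction i using Nat.twoStepInduction with
  | zero => simp [pell]
  | one => norm_num [pell]; linear_combination sqrtTwoSubOne_sq_add
  | more i ih₀ ih₁ =>
    have h₂ : (pell (i + 2) : ℝ) = 2 * pell (i + 1) + pell i := by norm_num [pell]
    have h₃ : (pell (i + 2 + 1) : ℝ) = 2 * pell (i + 2) + pell (i + 1) := by norm_num [pell]
    rw [h₃]
    linear_combination 2 * ih₁ + ih₀ - h₂ - (-α) ^ i * α * sqrtTwoSubOne_sq_add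

noncomputable def negAlphaSum (e : ℕ → ℕ) (n : ℕ) : ℝ :=
  ∑ j ∈ range n, (e j : ℝ) * (-α) ^ j

lemma negAlphaSum_succ (e : ℕ → ℕ) (n : ℕ) :
    negAlphaSum e (n + 1) = e 0 - α * negAlphaSum (fun j => e (j + 1)) n := by
  rw [negAlphaSum, sum_range_succ', negAlphaSum, mul_sum, sub_eq_add_neg, ← sum_neg_distrib,
    add_comm]
  simp only [pow_zero, mul_one, pow_succ]
  congr 1
  exact sum_congr rfl fun j _ => by ring

lemma negAlphaSum_succ_bounds (e : ℕ → ℕ) (he : ∀ j, e j ≤ 2) (n : ℕ) :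
    (e 0 : ℝ) - 1 < negAlphaSum e (n + 1) ∧ negAlphaSum e (n + 1) < e 0 + α := by
  induction n generalizing e with
  | zero => simp [negAlphaSum, sqrtTwoSubOne_pos]
  | succ n ih =>
    obtain ⟨hlo, hhi⟩ := ih (fun j => e (j + 1)) (fun j => he (j + 1))
    have he₁ : (e 1 : ℝ) ≤ 2 := by exact_mod_cast he 1
    have hα := sqrtTwoSubOne_pos
    rw [negAlphaSum_succ]
    constructor
    · nlinarith [sqrtTwoSubOne_sq_add]
    · nlinarith

lemma sqrtTwoSubOne_mul_sum_pell (e : ℕ → ℕ) (k n : ℕ) :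
    α * ∑ j ∈ range n, (e j : ℝ) * pell (k + j + 1) =
      ∑ j ∈ range n, (e j : ℝ) * pell (k + j) + (-α) ^ k * α * negAlphaSum e n := by
  simp only [mul_sum, negAlphaSum, ← sum_add_distrib]
  refine sum_congr rfl fun j _ => ?_
  rw [← mul_left_comm, sqrtTwoSubOne_mul_pell_succ, pow_add]
  ring

lemma calpha_eq_zero_of_eq_add {N : ℕ} {M : ℤ} {ε : ℝ} (hN : α * N = M + ε)
    (hε : 0 ≤ ε) (hεα : ε + α < 1) : calpha N = 0 := by
  have hα := sqrtTwoSubOne_pos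
  have h₁ : ⌊α * (N : ℝ)⌋ = M := by
    rw [hN, Int.floor_intCast_add, Int.floor_eq_zero_iff.mpr ⟨hε, by linarith⟩, add_zero]
  have h₂ : ⌊α * ((N : ℝ) + 1)⌋ = M := by
    rw [mul_add_one, hN, add_assoc, Int.floor_intCast_add,
      Int.floor_eq_zero_iff.mpr ⟨by linarith, hεα⟩, add_zero]
  rw [calpha_eq, h₁, h₂, sub_self]

lemma calpha_eq_one_of_eq_sub {N : ℕ} {M : ℤ} {ε : ℝ} (hN : α * N = M - ε)
    (hε : 0 < ε) (hεα : ε < α) : calpha N = 1 := by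
  have hα₁ := sqrtTwoSubOne_lt_one
  have h₁ : ⌊α * (N : ℝ)⌋ = M - 1 := by
    rw [Int.floor_eq_iff, hN]; push_cast; constructor <;> linarith
  have h₂ : ⌊α * ((N : ℝ) + 1)⌋ = M := by
    rw [Int.floor_eq_iff, mul_add_one, hN]; constructor <;> linarith
  rw [calpha_eq, h₁, h₂]
  ring

lemma calpha_eq_one_iff_odd_of_eq {N M k : ℕ} {ε : ℝ} (hN : α * N = M + (-1) ^ k * ε)
    (hε : 0 < ε) (hεk : ε < α ^ k) (hεα : ε + α < 1) : calpha N = 1 ↔ Odd k := by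
  rcases Nat.even_or_odd k with hk | hk
  · have h₀ : calpha N = 0 :=
      calpha_eq_zero_of_eq_add (M := M) (by rw [hN, hk.neg_one_pow]; push_cast; ring) hε.le hεα
    rw [h₀]
    exact iff_of_false (by norm_num) (Nat.not_odd_iff_even.mpr hk)
  · have hα := sqrtTwoSubOne_pos
    have hεα' : ε < α := hεk.trans_le (pow_le_of_le_one hα.le sqrtTwoSubOne_lt_one.le hk.pos.ne')
    exact iff_of_true
      (calpha_eq_one_of_eq_sub (M := M) (by rw [hN, hk.neg_one_pow]; push_cast; ring) hε hεα') hk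

/-- The digits are read from the least nonzero one on: `e j = d (k + j)`. -/
lemma calpha_eq_one_iff_odd_of_digits (e : ℕ → ℕ) (he : ∀ j, e j ≤ 2) (he₀ : e 0 ≠ 0)
    (k n : ℕ) (hk₀ : k = 0 → e 0 ≤ 1) (N : ℕ)
    (hN : (N : ℝ) = ∑ j ∈ range (n + 1), (e j : ℝ) * pell (k + j + 1)) :
    calpha N = 1 ↔ Odd k := by
  set S := negAlphaSum e (n + 1)
  obtain ⟨hlo, hhi⟩ := negAlphaSum_succ_bounds e he n
  have hα := sqrtTwoSubOne_pos
  have he₀' : (1 : ℝ) ≤ e 0 := by exact_mod_cast Nat.one_le_iff_ne_zero.mpr he₀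
  have he₂ : (e 0 : ℝ) ≤ 2 := by exact_mod_cast he 0
  have hαS : 0 < α * S := by nlinarith
  have hαS₁ : α * S < 1 := by nlinarith [sqrtTwoSubOne_sq_add]
  refine calpha_eq_one_iff_odd_of_eq (M := ∑ j ∈ range (n + 1), e j * pell (k + j))
    (ε := α ^ k * (α * S)) ?_ (by positivity) (mul_lt_of_lt_one_right (pow_pos hα k) hαS₁) ?_
  · rw [hN, sqrtTwoSubOne_mul_sum_pell, neg_pow]
    push_cast
    ring
  · rcases Nat.eq_zero_or_pos k with rfl | hk
    · have : (e 0 : ℝ) ≤ 1 := by exact_mod_cast hk₀ rfl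
      nlinarith [sqrtTwoSubOne_sq_add]
    · have : α ^ k ≤ α := pow_le_of_le_one hα.le sqrtTwoSubOne_lt_one.le hk.ne'
      nlinarith [sqrtTwoSubOne_sq_add]

lemma finsupp_sum_eq_sum_range_shift {d : ℕ →₀ ℕ} {k n : ℕ} (f : ℕ → ℕ)
    (hsupp : d.support ⊆ range (k + n)) (hmin : ∀ i, i < k → d i = 0) :
    (d.sum fun i c => c * f i) = ∑ j ∈ range n, d (k + j) * f (k + j) := by
  rw [Finsupp.sum_of_support_subset d hsupp _ fun i _ => zero_mul (f i), sum_range_add,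
    sum_eq_zero fun i hi => by rw [hmin i (mem_range.mp hi), zero_mul], zero_add]

theorem calpha_eq_one_iff_odd_trailing_zeros_general (N : ℕ) (d : ℕ →₀ ℕ)
    (hsum : (d.sum fun i c => c * pell (i + 1)) = N)
    (hd0 : d 0 ≤ 1) (hle : ∀ i, d i ≤ 2)
    (k : ℕ) (hk : d k ≠ 0) (hmin : ∀ i, i < k → d i = 0) :
    calpha N = 1 ↔ Odd k := by
  obtain ⟨B, hB⟩ := d.support.exists_nat_subset_range
  have hsupp : d.support ⊆ range (k + (B + 1)) := hB.trans (range_subset_range.mpr (by omega))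
  refine calpha_eq_one_iff_odd_of_digits (fun j => d (k + j)) (fun j => hle _) hk k B
    (fun hk₀ => by simpa [hk₀] using hd0) N ?_
  rw [← hsum, finsupp_sum_eq_sum_range_shift _ hsupp hmin]
  push_cast
  rfl

/-- If `d` is the canonical Pell representation of `N ≥ 1` and `k` is the least index
with `d k ≠ 0`, then `c_α[N] = 1` if and only if `k` is odd. -/
theorem calpha_eq_one_iff_odd_trailing_zeros (N : ℕ) (hN : 1 ≤ N) (d : ℕ →₀ ℕ)
    (hsum : (d.sum fun i c => c * pell (i + 1)) = N)
    (hd0 : d 0 ≤ 1) (hle : ∀ i, d i ≤ 2)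
    (hcarry : ∀ i, 1 ≤ i → d i = 2 → d (i - 1) = 0)
    (k : ℕ) (hk : d k ≠ 0) (hmin : ∀ i, i < k → d i = 0) :
    calpha N = 1 ↔ Odd k :=
  calpha_eq_one_iff_odd_trailing_zeros_general N d hsum hd0 hle k hk hmin
end

section
/- Every factor of the infinite word x_3 has exponent strictly less than 2 + √2/2: for all natural numbers i, n ≥ 1 and p ≥ 1, if x_3[i+j] = x_3[i+j+p] for all j with 0 ≤ j < n − p, then (n : ℝ)/p < 2 + √2/2. -/
/-- The infinite balanced word `x₃` over `{0,1,2}`, indexed from 0, obtained from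
`c_α` by replacing the 0's by `(01)^ω` and the 1's by `2^ω`. -/
noncomputable def x3 (i : ℕ) : ℕ :=
  if calpha (i + 1) = 0 then [0, 1].getD ((zcount (i + 1) - 1) % 2) 0
  else 2

namespace X3P

noncomputable def s : ℝ := Real.sqrt 2
noncomputable def al : ℝ := s - 1

lemma s_nonneg : 0 ≤ s := Real.sqrt_nonneg 2
lemma s_sq : s ^ 2 = 2 := Real.sq_sqrt (by norm_num)
lemma s_gt : (4:ℝ)/3 < s := by
  unfold s; nlinarith [Real.sq_sqrt (show (0:ℝ) ≤ 2 by norm_num), Real.sqrt_nonneg 2]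
lemma s_lt : s < 3/2 := by
  unfold s; nlinarith [Real.sq_sqrt (show (0:ℝ) ≤ 2 by norm_num), Real.sqrt_nonneg 2]
lemma al_def : al = s - 1 := rfl
lemma al_pos : 0 < al := by rw [al_def]; linarith [s_gt]
lemma al_lt_half : al < 1/2 := by rw [al_def]; linarith [s_lt]
lemma al_gt_third : 1/3 < al := by rw [al_def]; linarith [s_gt]

lemma sqrt2_irr (k : ℕ) (hk : k ≠ 0) (z : ℤ) : s * k ≠ z := by
  intro h
  have hk' : (k:ℝ) ≠ 0 := Nat.cast_ne_zero.2 hk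
  have hs : s = ((((z:ℚ) / (k:ℚ)) : ℚ) : ℝ) := by
    push_cast
    field_simp
    linarith [h]
  exact irrational_sqrt_two ⟨(z:ℚ)/(k:ℚ), hs.symm⟩

lemma al_mul_ne (k : ℕ) (hk : k ≠ 0) (z : ℤ) : al * k ≠ z := by
  intro h
  apply sqrt2_irr k hk (z + k)
  push_cast
  rw [al_def] at h
  linarith

lemma fract_def (r : ℝ) : Int.fract r = r - ⌊r⌋ := rfl

lemma calpha_eq (m : ℕ) : calpha m = ⌊Int.fract (al * m) + al⌋ := by
  have h1 : calpha m = ⌊al * ((m:ℝ)+1)⌋ - ⌊al * (m:ℝ)⌋ := rfl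
  have h2 : al * ((m:ℝ)+1) = (Int.fract (al * m) + al) + ((⌊al * (m:ℝ)⌋ : ℤ) : ℝ) := by
    rw [fract_def]; ring
  rw [h1, h2, Int.floor_add_intCast]
  ring

lemma calpha_zero_iff (m : ℕ) (hm : m ≠ 0) :
    calpha m = 0 ↔ Int.fract (al * m) < 1 - al := by
  have hne : Int.fract (al * m) ≠ 1 - al := by
    intro h
    apply al_mul_ne (m+1) (by omega) (⌊al * (m:ℝ)⌋ + 1)
    rw [fract_def] at h
    push_cast
    linarith
  have h0 := Int.fract_nonneg (al * (m:ℝ))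
  have h1 := Int.fract_lt_one (al * (m:ℝ))
  have hal0 := al_pos
  have hal1 := al_lt_half
  rw [calpha_eq]
  constructor
  · intro h
    by_contra hc
    push_neg at hc
    have hgt : 1 - al < Int.fract (al * m) := lt_of_le_of_ne hc (Ne.symm hne)
    have : (1:ℤ) ≤ ⌊Int.fract (al * m) + al⌋ := by
      apply Int.le_floor.2; push_cast; linarith
    omega
  · intro h
    exact Int.floor_eq_zero_iff.2 (Set.mem_Ico.2 ⟨by linarith, by linarith⟩)

lemma calpha_one_iff (m : ℕ) (hm : m ≠ 0) :
    calpha m = 1 ↔ 1 - al < Int.fract (al * m) := by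
  have hne : Int.fract (al * m) ≠ 1 - al := by
    intro h
    apply al_mul_ne (m+1) (by omega) (⌊al * (m:ℝ)⌋ + 1)
    rw [fract_def] at h
    push_cast
    linarith
  have h0 := Int.fract_nonneg (al * (m:ℝ))
  have h1 := Int.fract_lt_one (al * (m:ℝ))
  have hal0 := al_pos
  have hal1 := al_lt_half
  rw [calpha_eq]
  constructor
  · intro h
    rcases Int.floor_eq_iff.1 h with ⟨ha, hb⟩
    push_cast at ha
    rcases lt_or_ge (1-al) (Int.fract (al * m)) with hx | hx
    · exact hx
    · exact absurd (le_antisymm hx (by linarith)) hne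
  · intro h
    exact Int.floor_eq_iff.2 ⟨by push_cast; linarith, by push_cast; linarith⟩

lemma calpha_zero_or_one (m : ℕ) : calpha m = 0 ∨ calpha m = 1 := by
  have h0 := Int.fract_nonneg (al * (m:ℝ))
  have h1 := Int.fract_lt_one (al * (m:ℝ))
  have hal0 := al_pos
  have hal1 := al_lt_half
  rw [calpha_eq]
  rcases lt_or_ge (Int.fract (al * m) + al) 1 with h | h
  · left; exact Int.floor_eq_zero_iff.2 (Set.mem_Ico.2 ⟨by linarith, h⟩)
  · right
    exact Int.floor_eq_iff.2 ⟨by push_cast; linarith, by push_cast; linarith⟩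

lemma zcount_eq (m : ℕ) : (zcount m : ℤ) = m - ⌊al * ((m:ℝ)+1)⌋ := by
  induction m with
  | zero =>
    have h1 : zcount 0 = 0 := by
      unfold zcount
      simp
    have h2 : ⌊al * (((0:ℕ):ℝ)+1)⌋ = 0 := by
      apply Int.floor_eq_zero_iff.2
      refine Set.mem_Ico.2 ⟨by push_cast; linarith [al_pos], by push_cast; linarith [al_lt_half]⟩
    rw [h1, h2]
    simp
  | succ m ih =>
    have hsplit : zcount (m+1) = zcount m + (if calpha (m+1) = 0 then 1 else 0) := by
      unfold zcount
      rw [show Finset.Icc 1 (m+1) = insert (m+1) (Finset.Icc 1 m) by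
        ext a; simp [Finset.mem_Icc]; omega]
      rw [Finset.filter_insert]
      by_cases h : calpha (m+1) = 0
      · rw [if_pos h, if_pos h, Finset.card_insert_of_notMem (by simp)]
      · rw [if_neg h, if_neg h]; ring
    have hc : calpha (m+1) = ⌊al * (((m+1):ℕ):ℝ) + al⌋ - ⌊al * (((m+1):ℕ):ℝ)⌋ := by
      have : calpha (m+1) = ⌊al * ((((m+1):ℕ):ℝ)+1)⌋ - ⌊al * (((m+1):ℕ):ℝ)⌋ := rfl
      rw [this]
      ring_nf
    rcases calpha_zero_or_one (m+1) with h | h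
    · rw [hsplit, if_pos h]
      push_cast
      rw [ih]
      have : ⌊al * (((m:ℝ)+1)+1)⌋ = ⌊al * ((m:ℝ)+1)⌋ := by
        have h2 := hc
        rw [h] at h2
        have : al * (((m+1):ℕ):ℝ) + al = al * (((m:ℝ)+1)+1) := by push_cast; ring
        rw [this] at h2
        have h3 : al * (((m+1):ℕ):ℝ) = al * ((m:ℝ)+1) := by push_cast; ring
        rw [h3] at h2
        omega
      rw [this]
      push_cast
      ring
    · rw [hsplit, if_neg (by omega)]
      push_cast
      rw [ih]
      have : ⌊al * (((m:ℝ)+1)+1)⌋ = ⌊al * ((m:ℝ)+1)⌋ + 1 := by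
        have h2 := hc
        rw [h] at h2
        have e1 : al * (((m+1):ℕ):ℝ) + al = al * (((m:ℝ)+1)+1) := by push_cast; ring
        rw [e1] at h2
        have e2 : al * (((m+1):ℕ):ℝ) = al * ((m:ℝ)+1) := by push_cast; ring
        rw [e2] at h2
        omega
      rw [this]
      push_cast
      ring

lemma zcount_pos (i : ℕ) (h : calpha (i+1) = 0) : 1 ≤ zcount (i+1) := by
  apply Finset.card_pos.2
  exact ⟨i+1, Finset.mem_filter.2 ⟨Finset.mem_Icc.2 ⟨by omega, le_refl _⟩, h⟩⟩

lemma x3_of_zero (i : ℕ) (h : calpha (i+1) = 0) : x3 i = (zcount (i+1) - 1) % 2 := by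
  unfold x3
  rw [if_pos h]
  rcases Nat.mod_two_eq_zero_or_one (zcount (i+1) - 1) with h2 | h2 <;> rw [h2] <;> rfl

lemma x3_of_one (i : ℕ) (h : calpha (i+1) = 1) : x3 i = 2 := by
  unfold x3
  rw [if_neg (by omega)]

lemma x3_ne_two_of_zero (i : ℕ) (h : calpha (i+1) = 0) : x3 i ≠ 2 := by
  rw [x3_of_zero i h]
  omega

lemma conds (i n p : ℕ) (hp : 1 ≤ p) (hn2 : p + 2 ≤ n)
    (hper : ∀ j, j + p < n → x3 (i + j) = x3 (i + j + p)) :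
    ∀ m : ℕ, i + 1 ≤ m → m ≤ i + (n - p) →
      ((calpha m = 1 ↔ calpha (m + p) = 1) ∧
       (calpha m = 0 → calpha (m + p) = 0 ∧ (zcount m) % 2 = (zcount (m + p)) % 2)) := by
  intro m h1 h2
  have hj : (m - i - 1) + p < n := by omega
  have hx := hper (m - i - 1) hj
  have e1 : i + (m - i - 1) = m - 1 := by omega
  have e2 : i + (m - i - 1) + p = m + p - 1 := by omega
  rw [e2, e1] at hx
  have em : m - 1 + 1 = m := by omega
  have emp : m + p - 1 + 1 = m + p := by omega
  constructor
  · constructor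
    · intro hc
      rcases calpha_zero_or_one (m+p) with h | h
      · exfalso
        apply x3_ne_two_of_zero (m+p-1) (by rw [emp]; exact h)
        rw [← hx]
        exact x3_of_one (m-1) (by rw [em]; exact hc)
      · exact h
    · intro hc
      rcases calpha_zero_or_one m with h | h
      · exfalso
        apply x3_ne_two_of_zero (m-1) (by rw [em]; exact h)
        rw [hx]
        exact x3_of_one (m+p-1) (by rw [emp]; exact hc)
      · exact h
  · intro hc
    have hcp : calpha (m+p) = 0 := by
      rcases calpha_zero_or_one (m+p) with h | h
      · exact h
      · exfalso
        apply x3_ne_two_of_zero (m-1) (by rw [em]; exact hc)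
        rw [hx]
        exact x3_of_one (m+p-1) (by rw [emp]; exact h)
    refine ⟨hcp, ?_⟩
    have v1 : x3 (m-1) = (zcount m - 1) % 2 := by
      have := x3_of_zero (m-1) (by rw [em]; exact hc); rw [em] at this; exact this
    have v2 : x3 (m+p-1) = (zcount (m+p) - 1) % 2 := by
      have := x3_of_zero (m+p-1) (by rw [emp]; exact hcp); rw [emp] at this; exact this
    have z1 := zcount_pos (m-1) (by rw [em]; exact hc)
    have z2 := zcount_pos (m+p-1) (by rw [emp]; exact hcp)
    rw [em] at z1; rw [emp] at z2
    rw [v1, v2] at hx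
    omega

lemma fract_shift (u : ℝ) (v : ℝ) :
    Int.fract (u + v) = Int.fract (Int.fract u + Int.fract v) := by
  have h : u + v = (Int.fract u + Int.fract v) + ((⌊u⌋ + ⌊v⌋ : ℤ):ℝ) := by
    rw [fract_def, fract_def]; push_cast; ring
  rw [h, Int.fract_add_intCast]

lemma floor_shift (u : ℝ) (v : ℝ) :
    ⌊u + v⌋ = ⌊u⌋ + ⌊v⌋ + ⌊Int.fract u + Int.fract v⌋ := by
  have h : u + v = (Int.fract u + Int.fract v) + ((⌊u⌋ + ⌊v⌋ : ℤ):ℝ) := by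
    rw [fract_def, fract_def]; push_cast; ring
  rw [h, Int.floor_add_intCast]; ring

lemma fract_eval_lo (a : ℝ) (h0 : 0 ≤ a) (h1 : a < 1) : Int.fract a = a :=
  Int.fract_eq_self.2 ⟨h0, h1⟩

lemma fract_eval_hi (a : ℝ) (h0 : 1 ≤ a) (h1 : a < 2) : Int.fract a = a - 1 := by
  have h2 : Int.fract a = Int.fract (a - 1) := by
    conv_lhs => rw [show a = (a - 1) + ((1:ℤ):ℝ) by push_cast; ring]
    rw [Int.fract_add_intCast]
  rw [h2, fract_eval_lo _ (by linarith) (by linarith)]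


lemma s_al : s * al = 2 - s := by rw [al_def]; nlinarith [s_sq]
lemma al_sq : al * al = 3 - 2*s := by rw [al_def]; nlinarith [s_sq]
lemma al_mul_beta : al * (s + 1) = 1 := by rw [al_def]; nlinarith [s_sq]
def pl : ℕ → ℕ × ℕ
  | 0 => (1, 0)
  | (j+1) => ((pl j).1 + 2 * (pl j).2, (pl j).1 + (pl j).2)
def px (j : ℕ) : ℕ := (pl j).1
def py (j : ℕ) : ℕ := (pl j).2
lemma px_succ (j : ℕ) : px (j+1) = px j + 2 * py j := rfl
lemma py_succ (j : ℕ) : py (j+1) = px j + py j := rfl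
lemma px0 : px 0 = 1 := rfl
lemma py0 : py 0 = 0 := rfl
lemma px_pos (j : ℕ) : 0 < px j := by
  induction j with
  | zero => norm_num [px0]
  | succ j ih => rw [px_succ]; omega
lemma py_mono (j : ℕ) : py j ≤ py (j+1) := by rw [py_succ]; omega
lemma py_rec (m : ℕ) : py (m+2) = 2 * py (m+1) + py m := by
  have h1 : py (m+2) = px (m+1) + py (m+1) := rfl
  have h2 : px (m+1) = px m + 2 * py m := rfl
  have h3 : py (m+1) = px m + py m := rfl
  omega
lemma pell_id2 (j : ℕ) : (px j : ℝ) - s * py j = (-al)^j := by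
  induction j with
  | zero => simp [px0, py0]
  | succ j ih =>
    rw [px_succ, py_succ, pow_succ, ← ih, al_def]
    push_cast
    nlinarith [s_sq]
lemma step_id (j : ℕ) : ((py j : ℕ) : ℝ) * s = (px j : ℝ) - (-al)^j := by
  have := pell_id2 j; linarith
lemma step_even (j : ℕ) (hj : Even j) : ((py j : ℕ) : ℝ) * s = (px j : ℝ) - al^j := by
  rw [step_id, hj.neg_pow]
lemma step_odd (j : ℕ) (hj : Odd j) : ((py j : ℕ) : ℝ) * s = (px j : ℝ) + al^j := by
  rw [step_id, hj.neg_pow]; ring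

lemma moveN (x : ℝ) (t₀ c : ℕ) (X : ℤ) (η : ℝ) (hc : (c:ℝ) * s = X + η)
    (h0 : 0 ≤ Int.fract (x + (t₀:ℝ) * s) + η) (h1 : Int.fract (x + (t₀:ℝ) * s) + η < 1) :
    Int.fract (x + ((t₀ + c : ℕ) : ℝ) * s) = Int.fract (x + (t₀:ℝ) * s) + η := by
  have key : x + ((t₀ + c : ℕ) : ℝ) * s
      = (Int.fract (x + (t₀:ℝ) * s) + η) + ((⌊x + (t₀:ℝ)*s⌋ + X : ℤ) : ℝ) := by
    push_cast
    have : Int.fract (x + (t₀:ℝ)*s) = x + (t₀:ℝ)*s - ⌊x + (t₀:ℝ)*s⌋ := rfl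
    rw [this]
    linarith [hc]
  rw [key, Int.fract_add_intCast, Int.fract_eq_self.2 ⟨h0, h1⟩]

set_option maxHeartbeats 2000000 in
lemma hit : ∀ m : ℕ, 1 ≤ m → ∀ x : ℝ,
    ((∃ t : ℕ, t + 1 ≤ py (m+1) + py m ∧ Int.fract (x + (t:ℝ)*s) ≤ al^m) ∧
     (∃ t : ℕ, t + 1 ≤ py (m+1) + py m ∧ 1 - al^m ≤ Int.fract (x + (t:ℝ)*s)) ∧
     (∃ t : ℕ, t + 1 ≤ py (m+1) ∧ Int.fract (x + (t:ℝ)*s) ≤ s * al^m) ∧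
     (∃ t : ℕ, t + 1 ≤ py (m+1) ∧ 1 - s * al^m ≤ Int.fract (x + (t:ℝ)*s))) := by
  intro m
  induction m with
  | zero => omega
  | succ m ih =>
    intro _ x
    rcases Nat.lt_or_ge m 1 with hbase | hm
    · -- base case m = 0
      have hm0 : m = 0 := by omega
      subst hm0
      have hy1 : py (0+1) = 1 := rfl
      have hy0 : py 0 = 0 := rfl
      have hy2 : py (0+1+1) = 2 := rfl
      have hf0 : 0 ≤ Int.fract (x + ((0:ℕ):ℝ)*s) := Int.fract_nonneg _
      have hf1 : Int.fract (x + ((0:ℕ):ℝ)*s) < 1 := Int.fract_lt_one _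
      have hpow : al ^ (0+1) = al := pow_one al
      have hsal : s * al^(0+1) = 1 - al := by rw [hpow, s_al, al_def]; ring
      have c1 : ((1:ℕ):ℝ) * s = ((1:ℤ):ℝ) + al := by rw [al_def]; push_cast; ring
      have c1' : ((1:ℕ):ℝ) * s = ((2:ℤ):ℝ) + (al - 1) := by rw [al_def]; push_cast; ring
      have c2 : ((2:ℕ):ℝ) * s = ((3:ℤ):ℝ) + (-(al*al)) := by
        rw [al_sq]; push_cast; ring
      have c2' : ((2:ℕ):ℝ) * s = ((2:ℤ):ℝ) + (1 - al*al) := by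
        rw [al_sq]; push_cast; ring
      have haa : al*al = 3 - 2*s := al_sq
      refine ⟨?_, ?_, ?_, ?_⟩
      · rcases le_or_gt (Int.fract (x + ((0:ℕ):ℝ)*s)) al with h | h
        · exact ⟨0, by omega, by rw [hpow]; exact h⟩
        rcases le_or_gt (1 - al) (Int.fract (x + ((0:ℕ):ℝ)*s)) with h2 | h2
        · refine ⟨0 + 1, by omega, ?_⟩
          rw [moveN x 0 1 2 (al - 1) c1' (by linarith) (by linarith [al_lt_half]), hpow]
          linarith
        · refine ⟨0 + 2, by omega, ?_⟩
          rw [moveN x 0 2 3 (-(al*al)) c2 (by nlinarith [al_lt_half, al_pos]) (by nlinarith [al_pos]), hpow]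
          nlinarith [s_gt, s_lt]
      · rcases le_or_gt (1-al) (Int.fract (x + ((0:ℕ):ℝ)*s)) with h | h
        · exact ⟨0, by omega, by rw [hpow]; exact h⟩
        rcases le_or_gt (1 - 2*al) (Int.fract (x + ((0:ℕ):ℝ)*s)) with h2 | h2
        · refine ⟨0 + 1, by omega, ?_⟩
          rw [moveN x 0 1 1 al c1 (by linarith [al_pos]) (by linarith), hpow]
          linarith
        · refine ⟨0 + 2, by omega, ?_⟩
          rw [moveN x 0 2 2 (1 - al*al) c2' (by nlinarith [al_pos, al_lt_half]) (by nlinarith [al_pos, al_lt_half, s_gt]), hpow]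
          nlinarith [al_pos, al_lt_half, s_gt, s_lt]
      · rcases le_or_gt (Int.fract (x + ((0:ℕ):ℝ)*s)) (1-al) with h | h
        · exact ⟨0, by omega, by rw [hsal]; exact h⟩
        · refine ⟨0 + 1, by omega, ?_⟩
          rw [moveN x 0 1 2 (al - 1) c1' (by linarith) (by linarith [al_lt_half]), hsal]
          linarith [al_lt_half]
      · rcases le_or_gt al (Int.fract (x + ((0:ℕ):ℝ)*s)) with h | h
        · exact ⟨0, by omega, by rw [hsal]; linarith⟩
        · refine ⟨0 + 1, by omega, ?_⟩
          rw [moveN x 0 1 1 al c1 (by linarith [al_pos]) (by linarith [al_lt_half]), hsal]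
          linarith [al_pos]
    · -- inductive step, m ≥ 1
      obtain ⟨⟨tL, hLb, hLf⟩, ⟨tH, hHb, hHf⟩, ⟨tL', hL'b, hL'f⟩, ⟨tH', hH'b, hH'f⟩⟩ := ih hm x
      have hrec : py (m+2) = 2 * py (m+1) + py m := py_rec m
      have hmono : py m ≤ py (m+1) := py_mono m
      -- power facts
      have hp0 : (0:ℝ) < al^m := pow_pos al_pos m
      have hp1 : al^(m+1) = al^m * al := pow_succ al m
      have hp2 : al^(m+2) = al^m * al * al := by rw [pow_succ, pow_succ]
      have hs1 : (1:ℝ) < s := by linarith [s_gt]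
      have hs2 : s < 2 := by linarith [s_lt]
      have idA : al^m - al^(m+1) = s * al^(m+1) := by
        rw [hp1]; linear_combination (-(al^m)) * s_al - (al^m) * al_def
      have idB : s * al^m - al^m = al^(m+1) := by
        rw [hp1, al_def]; ring
      have idC : s * al^(m+1) - al^(m+2) = al^(m+1) := by
        rw [hp1, hp2]; linear_combination (-(al^m*al)) * al_def
      have hlt1 : al^(m+2) < al^(m+1) := by
        rw [hp1, hp2]; nlinarith [mul_pos hp0 al_pos, al_lt_half]
      have hlt2 : al^(m+1) < al^m := by
        rw [hp1]; nlinarith [hp0, al_lt_half, al_pos]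
      have hq1 : (0:ℝ) < al^(m+1) := pow_pos al_pos (m+1)
      have hq2 : (0:ℝ) < al^(m+2) := pow_pos al_pos (m+2)
      -- fract bounds for the four witnesses
      have bL0 : 0 ≤ Int.fract (x + (tL:ℝ)*s) := Int.fract_nonneg _
      have bL1 : Int.fract (x + (tL:ℝ)*s) < 1 := Int.fract_lt_one _
      have bH0 : 0 ≤ Int.fract (x + (tH:ℝ)*s) := Int.fract_nonneg _
      have bH1 : Int.fract (x + (tH:ℝ)*s) < 1 := Int.fract_lt_one _
      have bL'0 : 0 ≤ Int.fract (x + (tL':ℝ)*s) := Int.fract_nonneg _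
      have bL'1 : Int.fract (x + (tL':ℝ)*s) < 1 := Int.fract_lt_one _
      have bH'0 : 0 ≤ Int.fract (x + (tH':ℝ)*s) := Int.fract_nonneg _
      have bH'1 : Int.fract (x + (tH':ℝ)*s) < 1 := Int.fract_lt_one _
      rcases Nat.even_or_odd (m+1) with hpar | hpar
      · -- m+1 even, m odd
        have hmodd : Odd m := by
          rcases Nat.even_or_odd m with h | h
          · exfalso; rcases hpar with ⟨k, hk⟩; rcases h with ⟨l, hl⟩; omega
          · exact h
        have hm2odd : Odd (m+2) := hpar.add_one
        have eDown : ((py (m+1) : ℕ):ℝ) * s = (px (m+1) : ℝ) - al^(m+1) := step_even _ hpar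
        have eUp : ((py m : ℕ):ℝ) * s = (px m : ℝ) + al^m := step_odd _ hmodd
        have eUp2 : ((py (m+2) : ℕ):ℝ) * s = (px (m+2) : ℝ) + al^(m+2) := step_odd _ hm2odd
        -- L'(m+1) from L(m)
        have NL' : ∃ t : ℕ, t + 1 ≤ py (m+2) ∧ Int.fract (x + (t:ℝ)*s) ≤ s * al^(m+1) := by
          rcases le_or_gt (Int.fract (x + (tL:ℝ)*s)) (s * al^(m+1)) with h | h
          · exact ⟨tL, by omega, h⟩
          · refine ⟨tL + py (m+1), by omega, ?_⟩
            rw [moveN x tL (py (m+1)) (px (m+1)) (-(al^(m+1)))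
              (by push_cast; linarith [eDown]) (by linarith) (by linarith)]
            linarith [idA, hLf]
        -- H'(m+1) from H'(m)
        have NH' : ∃ t : ℕ, t + 1 ≤ py (m+2) ∧ 1 - s * al^(m+1) ≤ Int.fract (x + (t:ℝ)*s) := by
          rcases le_or_gt (1 - s * al^(m+1)) (Int.fract (x + (tH':ℝ)*s)) with h | h
          · exact ⟨tH', by omega, h⟩
          rcases le_or_gt (1 - al^m) (Int.fract (x + (tH':ℝ)*s)) with h2 | h2
          · refine ⟨tH' + (py m + py (m+1)), by omega, ?_⟩
            rw [moveN x tH' (py m + py (m+1)) (px m + px (m+1)) (al^m - al^(m+1))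
              (by push_cast; linarith [eUp, eDown]) (by linarith [idA, hq1]) (by linarith [idA])]
            linarith [idA, hs1, hq1]
          · refine ⟨tH' + py m, by omega, ?_⟩
            rw [moveN x tH' (py m) (px m) (al^m)
              (by push_cast; linarith [eUp]) (by linarith [hp0]) (by linarith)]
            linarith [idB, hH'f, hs1, hq1]
        -- L(m+1) from L'(m+1)
        obtain ⟨u, hub, huf⟩ := id NL'
        have NL : ∃ t : ℕ, t + 1 ≤ py (m+2) + py (m+1) ∧ Int.fract (x + (t:ℝ)*s) ≤ al^(m+1) := by
          have bu0 : 0 ≤ Int.fract (x + (u:ℝ)*s) := Int.fract_nonneg _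
          have bu1 : Int.fract (x + (u:ℝ)*s) < 1 := Int.fract_lt_one _
          rcases le_or_gt (Int.fract (x + (u:ℝ)*s)) (al^(m+1)) with h | h
          · exact ⟨u, by omega, h⟩
          · refine ⟨u + py (m+1), by omega, ?_⟩
            rw [moveN x u (py (m+1)) (px (m+1)) (-(al^(m+1)))
              (by push_cast; linarith [eDown]) (by linarith) (by linarith)]
            nlinarith [huf, hs2, hq1]
        -- H(m+1) from H'(m)
        have NH : ∃ t : ℕ, t + 1 ≤ py (m+2) + py (m+1) ∧ 1 - al^(m+1) ≤ Int.fract (x + (t:ℝ)*s) := by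
          rcases le_or_gt (1 - al^(m+1)) (Int.fract (x + (tH':ℝ)*s)) with h | h
          · exact ⟨tH', by omega, h⟩
          rcases le_or_gt (1 - s*al^(m+1)) (Int.fract (x + (tH':ℝ)*s)) with h2 | h2
          · refine ⟨tH' + py (m+2), by omega, ?_⟩
            rw [moveN x tH' (py (m+2)) (px (m+2)) (al^(m+2))
              (by push_cast; linarith [eUp2]) (by linarith [hq2]) (by linarith [hlt1])]
            linarith [idC]
          rcases le_or_gt (1 - al^m) (Int.fract (x + (tH':ℝ)*s)) with h3 | h3
          · refine ⟨tH' + (py m + py (m+1)), by omega, ?_⟩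
            rw [moveN x tH' (py m + py (m+1)) (px m + px (m+1)) (al^m - al^(m+1))
              (by push_cast; linarith [eUp, eDown]) (by linarith [idA, hq1]) (by linarith [idA])]
            linarith [idA]
          · refine ⟨tH' + py m, by omega, ?_⟩
            rw [moveN x tH' (py m) (px m) (al^m)
              (by push_cast; linarith [eUp]) (by linarith [hp0]) (by linarith)]
            linarith [idB, hH'f]
        exact ⟨NL, NH, NL', NH'⟩
      · -- m+1 odd, m even
        have hmeven : Even m := by
          rcases Nat.even_or_odd m with h | h
          · exact h
          · exfalso; rcases hpar with ⟨k, hk⟩; rcases h with ⟨l, hl⟩; omega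
        have hm2even : Even (m+2) := by
          rcases hmeven with ⟨k, hk⟩; exact ⟨k+1, by omega⟩
        have oUp : ((py (m+1) : ℕ):ℝ) * s = (px (m+1) : ℝ) + al^(m+1) := step_odd _ hpar
        have oDown : ((py m : ℕ):ℝ) * s = (px m : ℝ) - al^m := step_even _ hmeven
        have oDown2 : ((py (m+2) : ℕ):ℝ) * s = (px (m+2) : ℝ) - al^(m+2) := step_even _ hm2even
        -- H'(m+1) from H(m)
        have NH' : ∃ t : ℕ, t + 1 ≤ py (m+2) ∧ 1 - s * al^(m+1) ≤ Int.fract (x + (t:ℝ)*s) := by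
          rcases le_or_gt (1 - s * al^(m+1)) (Int.fract (x + (tH:ℝ)*s)) with h | h
          · exact ⟨tH, by omega, h⟩
          · refine ⟨tH + py (m+1), by omega, ?_⟩
            rw [moveN x tH (py (m+1)) (px (m+1)) (al^(m+1))
              (by push_cast; linarith [oUp]) (by linarith [hq1]) (by linarith [idC, hq2])]
            linarith [idA, hHf]
        -- L'(m+1) from L'(m)
        have NL' : ∃ t : ℕ, t + 1 ≤ py (m+2) ∧ Int.fract (x + (t:ℝ)*s) ≤ s * al^(m+1) := by
          rcases le_or_gt (Int.fract (x + (tL':ℝ)*s)) (s * al^(m+1)) with h | h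
          · exact ⟨tL', by omega, h⟩
          rcases le_or_gt (Int.fract (x + (tL':ℝ)*s)) (al^m) with h2 | h2
          · refine ⟨tL' + (py m + py (m+1)), by omega, ?_⟩
            rw [moveN x tL' (py m + py (m+1)) (px m + px (m+1) : ℤ) (al^(m+1) - al^m)
              (by push_cast; linarith [oDown, oUp]) (by linarith [idA]) (by linarith [idA, hq1])]
            linarith [idA, hs1, hq1]
          · refine ⟨tL' + py m, by omega, ?_⟩
            rw [moveN x tL' (py m) (px m) (-(al^m))
              (by push_cast; linarith [oDown]) (by linarith) (by linarith [hp0])]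
            linarith [idB, hL'f, hs1, hq1]
        -- H(m+1) from H'(m+1)
        obtain ⟨u, hub, huf⟩ := id NH'
        have NH : ∃ t : ℕ, t + 1 ≤ py (m+2) + py (m+1) ∧ 1 - al^(m+1) ≤ Int.fract (x + (t:ℝ)*s) := by
          have bu0 : 0 ≤ Int.fract (x + (u:ℝ)*s) := Int.fract_nonneg _
          have bu1 : Int.fract (x + (u:ℝ)*s) < 1 := Int.fract_lt_one _
          rcases le_or_gt (1 - al^(m+1)) (Int.fract (x + (u:ℝ)*s)) with h | h
          · exact ⟨u, by omega, h⟩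
          · refine ⟨u + py (m+1), by omega, ?_⟩
            rw [moveN x u (py (m+1)) (px (m+1)) (al^(m+1))
              (by push_cast; linarith [oUp]) (by linarith [hq1]) (by linarith)]
            linarith [huf, idC, hq2, hlt1]
        -- L(m+1) from L'(m)
        have NL : ∃ t : ℕ, t + 1 ≤ py (m+2) + py (m+1) ∧ Int.fract (x + (t:ℝ)*s) ≤ al^(m+1) := by
          rcases le_or_gt (Int.fract (x + (tL':ℝ)*s)) (al^(m+1)) with h | h
          · exact ⟨tL', by omega, h⟩
          rcases le_or_gt (Int.fract (x + (tL':ℝ)*s)) (s * al^(m+1)) with h2 | h2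
          · refine ⟨tL' + py (m+2), by omega, ?_⟩
            rw [moveN x tL' (py (m+2)) (px (m+2)) (-(al^(m+2)))
              (by push_cast; linarith [oDown2]) (by linarith [hlt1]) (by linarith [hq2])]
            linarith [idC]
          rcases le_or_gt (Int.fract (x + (tL':ℝ)*s)) (al^m) with h3 | h3
          · refine ⟨tL' + (py m + py (m+1)), by omega, ?_⟩
            rw [moveN x tL' (py m + py (m+1)) (px m + px (m+1) : ℤ) (al^(m+1) - al^m)
              (by push_cast; linarith [oDown, oUp]) (by linarith [idA]) (by linarith [idA, hq1])]
            linarith [idA]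
          · refine ⟨tL' + py m, by omega, ?_⟩
            rw [moveN x tL' (py m) (px m) (-(al^m))
              (by push_cast; linarith [oDown]) (by linarith) (by linarith [hp0])]
            linarith [idB, hL'f]
        exact ⟨NL, NH, NL', NH'⟩

lemma pell_id1 (j : ℕ) : (px j : ℝ) + s * py j = (s+1)^j := by
  induction j with
  | zero => simp [px0, py0]
  | succ j ih =>
    rw [px_succ, py_succ, pow_succ, ← ih]
    push_cast
    nlinarith [s_sq]

lemma py_real (j : ℕ) : 2*s*((py j : ℕ):ℝ) = (s+1)^j - (-al)^j := by
  have h1 := pell_id1 j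
  have h2 := pell_id2 j
  linarith

lemma negpow_le (j : ℕ) : (-al)^j ≤ 1 ∧ -1 ≤ (-al)^j := by
  have h : |(-al)^j| ≤ 1 := by
    rw [abs_pow, abs_neg, abs_of_pos al_pos]
    exact pow_le_one₀ al_pos.le (by linarith [al_lt_half])
  exact ⟨by linarith [abs_le.1 h], by linarith [abs_le.1 h]⟩

lemma prodB (j : ℕ) : al^j * (s+1)^j = 1 := by
  rw [← mul_pow, al_mul_beta, one_pow]

lemma fract_orbit (k₀ t : ℕ) :
    Int.fract (al * ((k₀ + t : ℕ):ℝ)) = Int.fract (al * (k₀:ℝ) + (t:ℝ)*s) := by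
  have h : al * ((k₀ + t : ℕ):ℝ) = (al * (k₀:ℝ) + (t:ℝ)*s) + ((-(t:ℤ) : ℤ):ℝ) := by
    push_cast; rw [al_def]; ring
  rw [h, Int.fract_add_intCast]

lemma pow_anti {j k : ℕ} (h : j ≤ k) : al^k ≤ al^j :=
  pow_le_pow_of_le_one al_pos.le (by linarith [al_lt_half]) h

lemma pell_classify : ∀ a : ℕ, ∀ b : ℕ, 1 ≤ a → 1 ≤ b →
    (a*a = 2*(b*b) + 1 ∨ a*a + 1 = 2*(b*b)) → ∃ j, 1 ≤ j ∧ a = px j ∧ b = py j := by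
  intro a
  induction a using Nat.strong_induction_on with
  | _ a ih =>
    intro b ha hb heq
    rcases Nat.lt_or_ge a 3 with hsmall | hlarge
    · have hb2 : b < 2 := by
        by_contra hc
        push_neg at hc
        rcases heq with h | h <;> nlinarith
      have hb1 : b = 1 := by omega
      subst hb1
      have ha1 : a = 1 := by
        rcases heq with h | h
        · nlinarith
        · nlinarith
      exact ⟨1, by norm_num, by rw [ha1]; rfl, rfl⟩
    · have hba : b < a := by
        by_contra hc
        push_neg at hc
        rcases heq with h | h <;> nlinarith
      have h2ba : a < 2*b := by
        by_contra hc
        push_neg at hc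
        rcases heq with h | h <;> nlinarith
      have ha' : 1 ≤ 2*b - a := by omega
      have hb' : 1 ≤ a - b := by omega
      have hlt : 2*b - a < a := by omega
      have heq' : (2*b-a)*(2*b-a) = 2*((a-b)*(a-b)) + 1 ∨
          (2*b-a)*(2*b-a) + 1 = 2*((a-b)*(a-b)) := by
        rcases heq with h | h
        · right
          zify [show a ≤ 2*b by omega, show b ≤ a by omega]
          zify at h
          nlinarith
        · left
          zify [show a ≤ 2*b by omega, show b ≤ a by omega]
          zify at h
          nlinarith
      obtain ⟨j, hj1, hxj, hyj⟩ := ih (2*b-a) hlt (a-b) ha' hb' heq'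
      refine ⟨j+1, by omega, ?_, ?_⟩
      · rw [px_succ, ← hxj, ← hyj]; omega
      · rw [py_succ, ← hxj, ← hyj]; omega

set_option maxHeartbeats 1000000 in
lemma part3 (p R k₀ : ℕ) (hp : 1 ≤ p) (r : ℤ) (hr2 : 2 ≤ r) (hre : 2 ∣ r)
    (δ : ℝ) (hδd : δ = |s * p - r|) (hδal : δ < al)
    (hk : ∀ t : ℕ, t < R → δ < Int.fract (al * ((k₀ + t : ℕ) : ℝ))) :
    (R : ℝ) < (1 + s/2) * p + 1 := by
  have hs1 : (1:ℝ) < s := by linarith [s_gt]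
  have hs2 : s < 2 := by linarith [s_lt]
  have hp1 : (1:ℝ) ≤ p := by exact_mod_cast hp
  have hrr : (2:ℝ) ≤ r := by exact_mod_cast hr2
  have hδ0 : 0 < δ := by
    rcases lt_or_eq_of_le (abs_nonneg (s * p - r)) with h | h
    · rw [hδd]; exact h
    · exfalso
      have h2 : s * p - r = 0 := abs_eq_zero.1 h.symm
      exact sqrt2_irr p (by omega) r (by linarith)
  have hδ1 : δ < 1 := by linarith [al_lt_half]
  set d : ℤ := 2*(p:ℤ)*p - r*r with hd
  have hdcast : ((d:ℤ):ℝ) = (s*p - r)*(s*p + r) := by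
    rw [hd]
    push_cast
    linear_combination (-(p:ℝ)^2) * s_sq
  have hd0 : d ≠ 0 := by
    intro h
    have h9 : (s*p - r)*(s*p + r) = 0 := by
      have h8 := hdcast
      rw [h] at h8
      push_cast at h8
      linarith
    have hsp : 0 < s*p + r := by nlinarith [s_nonneg]
    have h3 : s*p - r = 0 := by
      rcases mul_eq_zero.1 h9 with h1 | h1
      · exact h1
      · linarith
    exact sqrt2_irr p (by omega) r (by linarith)
  have hdeven : 2 ∣ d := by
    obtain ⟨r', hr'⟩ := hre
    exact ⟨(p:ℤ)*p - 2*(r'*r'), by rw [hd, hr']; ring⟩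
  have habs : |((d:ℤ):ℝ)| = δ * (s*p + r) := by
    have hsp : 0 < s*p + r := by nlinarith [s_nonneg]
    rw [hdcast, abs_mul, abs_of_pos hsp, hδd]
  have hrlt : (r:ℝ) < s*p + 1 := by
    have h1 : (r:ℝ) - s*p ≤ |s*p - r| := by
      rw [abs_sub_comm]; exact le_abs_self _
    rw [← hδd] at h1
    linarith
  have hd4 : 4 ≤ |d| ∨ |d| = 2 := by
    rcases hdeven with ⟨c, hc⟩
    have h1 := hd0
    rw [Int.abs_eq_natAbs]
    omega
  have hex : ∃ j : ℕ, al^(j+1) ≤ δ := by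
    obtain ⟨N, hN⟩ := exists_pow_lt_of_lt_one hδ0 (by linarith [al_lt_half] : al < 1)
    exact ⟨N, le_of_lt (lt_of_le_of_lt (pow_anti (by omega)) hN)⟩
  set m := Nat.find hex with hmdef
  have hm1 : al^(m+1) ≤ δ := Nat.find_spec hex
  have hmge : 1 ≤ m := by
    by_contra hc
    push_neg at hc
    interval_cases m
    · have h2 : al^(0+1) ≤ δ := hm1
      rw [pow_one] at h2
      linarith
  have hm2 : δ < al^m := by
    have h2 := Nat.find_min hex (show m - 1 < m by omega)
    push_neg at h2
    have e : m - 1 + 1 = m := by omega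
    rw [e] at h2
    exact h2
  have hBpos : (0:ℝ) < (s+1)^(m+1) := pow_pos (by linarith) _
  have hB'pos : (0:ℝ) < (s+1)^m := pow_pos (by linarith) _
  have hq1 : (0:ℝ) < al^(m+1) := pow_pos al_pos _
  have hq0 : (0:ℝ) < al^m := pow_pos al_pos _
  have pell_case : |d| = 2 → ∃ j, 1 ≤ j ∧ p = px j ∧ δ = s * al^j := by
    intro h2
    obtain ⟨r', hr'⟩ := hre
    have hr'1 : 1 ≤ r' := by omega
    have hpell : (p:ℤ)*p = 2*(r'*r') + 1 ∨ (p:ℤ)*p + 1 = 2*(r'*r') := by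
      have hdval : d = 2*((p:ℤ)*p - 2*(r'*r')) := by rw [hd, hr']; ring
      rcases (abs_eq (by norm_num : (0:ℤ) ≤ 2)).1 h2 with h | h
      · left; linarith [hdval, h]
      · right; linarith [hdval, h]
    set rn := r'.toNat with hrn
    have hrnc : (rn:ℤ) = r' := Int.toNat_of_nonneg (by omega)
    have hpelln : p*p = 2*(rn*rn) + 1 ∨ p*p + 1 = 2*(rn*rn) := by
      rcases hpell with h | h
      · left
        have : (p:ℤ)*p = 2*((rn:ℤ)*rn) + 1 := by rw [hrnc]; exact h
        exact_mod_cast this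
      · right
        have : (p:ℤ)*p + 1 = 2*((rn:ℤ)*rn) := by rw [hrnc]; exact h
        exact_mod_cast this
    obtain ⟨j, hj1, hpj, hrj⟩ := pell_classify p rn hp (by omega) hpelln
    refine ⟨j, hj1, hpj, ?_⟩
    have hid : s*(px j : ℝ) - 2*(py j : ℝ) = s*(-al)^j := by
      have h3 := pell_id2 j
      nlinarith [s_sq]
    have h4 : s * (p:ℝ) - r = s*(-al)^j := by
      rw [hpj, hr']
      rw [← hrnc, hrj]
      push_cast
      linarith [hid]
    rw [hδd, h4, abs_mul, abs_of_pos (by linarith : (0:ℝ) < s), abs_pow, abs_neg,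
      abs_of_pos al_pos]
  rcases lt_or_ge δ (s * al^(m+1)) with hcase | hcase
  · -- case A
    have hD4 : 4 ≤ |d| := by
      rcases hd4 with h | h
      · exact h
      · exfalso
        obtain ⟨j, hj1, hpj, hδj⟩ := pell_case h
        have hjm : ¬ (j ≤ m+1) := by
          intro hle
          have h5 : al^(m+1) ≤ al^j := pow_anti hle
          nlinarith
        push_neg at hjm
        have h6 : al^j ≤ al^(m+2) := pow_anti (by omega)
        have hsal : s * al < 1 := by rw [s_al]; linarith
        nlinarith [hq1, pow_succ al (m+1)]
    have h4lt : 4 < δ * (2*s*p + 1) := by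
      have h5 : (4:ℝ) ≤ |((d:ℤ):ℝ)| := by
        have h6 : ((4:ℤ):ℝ) ≤ ((|d|:ℤ):ℝ) := by exact_mod_cast hD4
        push_cast at h6
        exact h6
      nlinarith [habs, hδ0]
    have hrun : R < py (m+2) + py (m+1) := by
      by_contra hc
      push_neg at hc
      obtain ⟨t, ht, hf⟩ := (hit (m+1) (by omega) (al * (k₀:ℝ))).1
      have ht2 : t + 1 ≤ py (m+2) + py (m+1) := ht
      have h5 := hk t (by omega)
      rw [fract_orbit] at h5
      linarith
    have hRle : (R:ℝ) ≤ (py (m+2) : ℝ) + py (m+1) - 1 := by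
      have h5 : ((R:ℕ):ℝ) + 1 ≤ ((py (m+2) + py (m+1) : ℕ):ℝ) := by exact_mod_cast hrun
      push_cast at h5
      linarith
    have hBlt : 4*(s+1)^(m+1) < s*(2*s*p+1) := by
      nlinarith [h4lt, prodB (m+1), hBpos, hcase, hq1]
    have hG1 := negpow_le (m+1)
    have hG2 := negpow_le (m+2)
    have hpy1 := py_real (m+1)
    have hpy2 := py_real (m+2)
    have hpow2 : (s+1)^(m+2) = (s+1)*(s+1)^(m+1) := by rw [pow_succ]; ring
    nlinarith [hRle, hBlt, hpy1, hpy2, hpow2, hG1.1, hG1.2, hG2.1, hG2.2, s_sq, hp1, hs1, hs2]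
  · -- case B
    have hrun : R < py (m+2) := by
      by_contra hc
      push_neg at hc
      obtain ⟨t, ht, hf⟩ := (hit (m+1) (by omega) (al * (k₀:ℝ))).2.2.1
      have ht2 : t + 1 ≤ py (m+2) := ht
      have h5 := hk t (by omega)
      rw [fract_orbit] at h5
      linarith
    have hRle : (R:ℝ) ≤ (py (m+2) : ℝ) - 1 := by
      have h5 : ((R:ℕ):ℝ) + 1 ≤ ((py (m+2) : ℕ):ℝ) := by exact_mod_cast hrun
      linarith
    rcases hd4 with hD4 | hD2
    · have h4lt : 4 < δ * (2*s*p + 1) := by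
        have h5 : (4:ℝ) ≤ |((d:ℤ):ℝ)| := by
          have h6 : ((4:ℤ):ℝ) ≤ ((|d|:ℤ):ℝ) := by exact_mod_cast hD4
          push_cast at h6
          exact h6
        nlinarith [habs, hδ0]
      have hBlt : 4*(s+1)^m < 2*s*p+1 := by
        nlinarith [h4lt, prodB m, hB'pos, hm2, hq0]
      have hG2 := negpow_le (m+2)
      have hpy2 := py_real (m+2)
      have hpow2 : (s+1)^(m+2) = (s+1)*(s+1)*(s+1)^m := by rw [pow_succ, pow_succ]; ring
      nlinarith [hRle, hBlt, hpy2, hpow2, hG2.1, hG2.2, s_sq, hp1, hs1, hs2]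
    · obtain ⟨j, hj1, hpj, hδj⟩ := pell_case hD2
      have hjm : j = m+1 := by
        by_contra hne
        rcases Nat.lt_or_ge j (m+1) with hlt | hge
        · have h5 : al^m ≤ al^j := pow_anti (by omega)
          nlinarith [hm2, hq0]
        · have hge' : m+2 ≤ j := by omega
          have h5 : al^j ≤ al^(m+2) := pow_anti hge'
          have hsal : s * al < 1 := by rw [s_al]; linarith
          nlinarith [hcase, hq1, pow_succ al (m+1)]
      subst hjm
      have hid2 := pell_id2 (m+1)
      have hG := negpow_le (m+1)
      have hpyx : (py (m+2) : ℝ) = (px (m+1) : ℝ) + (py (m+1) : ℝ) := by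
        rw [py_succ]; push_cast; ring
      have hpx : (p:ℝ) = (px (m+1) : ℝ) := by rw [hpj]
      rw [hpx]
      nlinarith [hRle, hid2, hG.1, hG.2, hpyx, hs1, hs2, s_sq]
lemma fal1 : Int.fract (al * ((1:ℕ):ℝ)) = al := by
  have e : al * ((1:ℕ):ℝ) = al := by push_cast; ring
  rw [e, fract_eval_lo al al_pos.le (by linarith [al_lt_half])]

lemma fract_al_pos (k : ℕ) (hk : k ≠ 0) : 0 < Int.fract (al * (k:ℝ)) := by
  rcases lt_or_eq_of_le (Int.fract_nonneg (al * (k:ℝ))) with h | h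
  · exact h
  · exfalso
    apply al_mul_ne k hk ⌊al * (k:ℝ)⌋
    have := fract_def (al * (k:ℝ))
    rw [← h] at this
    linarith

lemma sum_ne_one (k l : ℕ) (h : k + l ≠ 0) :
    Int.fract (al*(k:ℝ)) + Int.fract (al*(l:ℝ)) ≠ 1 := by
  intro h1
  apply al_mul_ne (k+l) h (⌊al*(k:ℝ)⌋ + ⌊al*(l:ℝ)⌋ + 1)
  rw [fract_def, fract_def] at h1
  push_cast
  linarith

lemma sum3_ne_two (k l r : ℕ) (h : k + l + r ≠ 0) :
    Int.fract (al*(k:ℝ)) + Int.fract (al*(l:ℝ)) + Int.fract (al*(r:ℝ)) ≠ 2 := by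
  intro h1
  apply al_mul_ne (k+l+r) h (⌊al*(k:ℝ)⌋ + ⌊al*(l:ℝ)⌋ + ⌊al*(r:ℝ)⌋ + 2)
  rw [fract_def, fract_def, fract_def] at h1
  push_cast
  linarith

lemma fract_inj (k l : ℕ) (h : Int.fract (al*(k:ℝ)) = Int.fract (al*(l:ℝ))) : k = l := by
  by_contra hne
  rcases Nat.lt_or_ge k l with hlt | hge
  · apply al_mul_ne (l - k) (by omega) (⌊al*(l:ℝ)⌋ - ⌊al*(k:ℝ)⌋)
    rw [fract_def, fract_def] at h
    push_cast [Nat.cast_sub hlt.le]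
    linarith
  · apply al_mul_ne (k - l) (by omega) (⌊al*(k:ℝ)⌋ - ⌊al*(l:ℝ)⌋)
    rw [fract_def, fract_def] at h
    push_cast [Nat.cast_sub hge]
    linarith

set_option maxHeartbeats 4000000 in
lemma main (i n p : ℕ) (hp : 1 ≤ p)
    (hper : ∀ j, j + p < n → x3 (i + j) = x3 (i + j + p)) :
    (n : ℝ) < (2 + s/2) * p := by
  have hs1 : (1:ℝ) < s := by linarith [s_gt]
  have hs2 : s < 2 := by linarith [s_lt]
  have hp1 : (1:ℝ) ≤ p := by exact_mod_cast hp
  have ha0 := al_pos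
  have ha1 := al_lt_half
  have ha3 := al_gt_third
  rcases Nat.lt_or_ge n (p+2) with htriv | hn2
  · have : (n:ℝ) ≤ (p:ℝ) + 1 := by exact_mod_cast Nat.lt_succ_iff.1 htriv
    nlinarith
  -- main case : n ≥ p + 2
  have hconds := conds i n p hp hn2 hper
  set θ := Int.fract (al * (p:ℝ)) with hθdef
  set P := ⌊al * (p:ℝ)⌋ with hPdef
  have hθ0 : 0 < θ := fract_al_pos p (by omega)
  have hθ1 : θ < 1 := Int.fract_lt_one _
  -- fract-level condition A
  have cond1 : ∀ m : ℕ, i+1 ≤ m → m ≤ i+(n-p) →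
      (1 - al < Int.fract (al*(m:ℝ)) ↔ 1 - al < Int.fract (al*((m+p:ℕ):ℝ))) := by
    intro m h1 h2
    have h3 := (hconds m h1 h2).1
    rw [calpha_one_iff m (by omega), calpha_one_iff (m+p) (by omega)] at h3
    exact h3
  -- fract-level condition B
  have cond2 : ∀ m : ℕ, i+1 ≤ m → m ≤ i+(n-p) → Int.fract (al*(m:ℝ)) < 1 - al →
      (2:ℤ) ∣ (⌊Int.fract (al*((m+1:ℕ):ℝ)) + θ⌋ - ((p:ℤ) + P)) := by
    intro m h1 h2 hfr
    have hc0 : calpha m = 0 := (calpha_zero_iff m (by omega)).2 hfr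
    obtain ⟨hcp0, hzp⟩ := (hconds m h1 h2).2 hc0
    have z1 := zcount_eq m
    have z2 := zcount_eq (m+p)
    have ez1 : al * ((m:ℝ)+1) = al * ((m+1:ℕ):ℝ) := by push_cast; ring
    have ez2 : al * (((m+p:ℕ):ℝ)+1) = al * ((m+1:ℕ):ℝ) + al * (p:ℝ) := by push_cast; ring
    rw [ez1] at z1
    rw [ez2] at z2
    rw [floor_shift] at z2
    rw [← hθdef, ← hPdef] at z2
    omega
  -- value of fract for m+1 and m+p
  have e1 : ∀ m : ℕ, Int.fract (al*((m+1:ℕ):ℝ)) = Int.fract (Int.fract (al*(m:ℝ)) + al) := by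
    intro m
    have e : al*((m+1:ℕ):ℝ) = al*(m:ℝ) + al*((1:ℕ):ℝ) := by push_cast; ring
    rw [e, fract_shift, fal1]
  have e2 : ∀ m : ℕ, Int.fract (al*((m+p:ℕ):ℝ)) = Int.fract (Int.fract (al*(m:ℝ)) + θ) := by
    intro m
    have e : al*((m+p:ℕ):ℝ) = al*(m:ℝ) + al*(p:ℝ) := by push_cast; ring
    rw [e, fract_shift, ← hθdef]
  -- dichotomy for ε
  rcases Int.even_or_odd ((p:ℤ) + P) with hev | hodd
  · -- ε = 0 : w = 0 : fract(al(m+1)) + θ < 1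
    have w0 : ∀ m : ℕ, i+1 ≤ m → m ≤ i+(n-p) → Int.fract (al*(m:ℝ)) < 1 - al →
        Int.fract (al*((m+1:ℕ):ℝ)) + θ < 1 := by
      intro m h1 h2 hfr
      have hd := cond2 m h1 h2 hfr
      have hb0 : (0:ℝ) ≤ Int.fract (al*((m+1:ℕ):ℝ)) + θ :=
        add_nonneg (Int.fract_nonneg _) hθ0.le
      have hb1 : Int.fract (al*((m+1:ℕ):ℝ)) + θ < 2 := by
        linarith [Int.fract_lt_one (al*((m+1:ℕ):ℝ))]
      by_contra hc
      push_neg at hc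
      have hw : ⌊Int.fract (al*((m+1:ℕ):ℝ)) + θ⌋ = 1 :=
        Int.floor_eq_iff.2 ⟨by rw [Int.cast_one]; linarith, by rw [Int.cast_one]; linarith⟩
      rw [hw] at hd
      rcases hev with ⟨c, hcv⟩
      omega
    rcases lt_trichotomy θ al with hθa | hθa | hθa
    · -- MAIN CASE M1 : ε even, θ < al
      have hp2 : 2 ≤ p := by
        by_contra hc
        push_neg at hc
        interval_cases p
        · have : θ = al := by rw [hθdef]; exact fal1
          linarith
      have claimU : ∀ m : ℕ, i+1 ≤ m → m ≤ i+(n-p) →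
          Int.fract (al*(m:ℝ)) < 1 - θ := by
        intro m h1 h2
        have hu1 : Int.fract (al*(m:ℝ)) < 1 := Int.fract_lt_one _
        have hune : Int.fract (al*(m:ℝ)) + θ ≠ 1 := by
          rw [hθdef]; exact sum_ne_one m p (by omega)
        by_contra hc
        push_neg at hc
        have hgt : 1 - θ < Int.fract (al*(m:ℝ)) := by
          rcases lt_or_eq_of_le hc with h | h
          · exact h
          · exact absurd (by linarith : Int.fract (al*(m:ℝ)) + θ = 1) hune
        have hu_hi : 1 - al < Int.fract (al*(m:ℝ)) := by linarith
        have hAp := (cond1 m h1 h2).1 hu_hi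
        have hval : Int.fract (al*((m+p:ℕ):ℝ)) = Int.fract (al*(m:ℝ)) + θ - 1 := by
          rw [e2 m, fract_eval_hi _ (by linarith) (by linarith)]
        rw [hval] at hAp
        linarith
      have claim1 : ∀ m : ℕ, i+1 ≤ m → m ≤ i+(n-p) →
          θ < Int.fract (al*((m+p:ℕ):ℝ)) := by
        intro m h1 h2
        have hu0 : 0 < Int.fract (al*(m:ℝ)) := fract_al_pos m (by omega)
        have hU := claimU m h1 h2
        rw [e2 m, fract_eval_lo _ (by linarith) (by linarith)]
        linarith
      have claim2 : ∀ m : ℕ, i+1 ≤ m → m ≤ i+(n-p) →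
          θ < Int.fract (al*((m+p+1:ℕ):ℝ)) := by
        intro m h1 h2
        have hu0 : 0 < Int.fract (al*(m:ℝ)) := fract_al_pos m (by omega)
        have hu1 : Int.fract (al*(m:ℝ)) < 1 := Int.fract_lt_one _
        have hU := claimU m h1 h2
        have hne : Int.fract (al*(m:ℝ)) ≠ 1 - al := by
          intro h
          apply sum_ne_one m 1 (by omega)
          rw [fal1]; linarith
        rcases lt_or_gt_of_ne hne with hlo | hhi
        · have hv : Int.fract (al*((m+1:ℕ):ℝ)) = Int.fract (al*(m:ℝ)) + al := by
            rw [e1 m, fract_eval_lo _ (by linarith) (by linarith)]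
          have hw := w0 m h1 h2 hlo
          rw [hv] at hw
          rw [show m+p+1 = (m+1)+p by omega, e2 (m+1), hv,
            fract_eval_lo _ (by linarith) (by linarith)]
          linarith
        · have hAp := (cond1 m h1 h2).1 hhi
          have hvmp : Int.fract (al*((m+p:ℕ):ℝ)) = Int.fract (al*(m:ℝ)) + θ := by
            rw [e2 m, fract_eval_lo _ (by linarith) (by linarith)]
          rw [hvmp] at hAp
          rw [show m+p+1 = (m+p)+1 by omega, e1 (m+p), hvmp,
            fract_eval_hi _ (by linarith) (by linarith)]
          linarith
      have hrun : ∀ t : ℕ, t < n - p + 1 →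
          θ < Int.fract (al * (((i+p+1) + t : ℕ):ℝ)) := by
        intro t ht
        rcases Nat.eq_zero_or_pos t with rfl | htpos
        · rw [show (i+p+1) + 0 = (i+1)+p by omega]
          exact claim1 (i+1) (le_refl _) (by omega)
        · rw [show (i+p+1) + t = (i+t)+p+1 by omega]
          exact claim2 (i+t) (by omega) (by omega)
      have hr2 : 2 ≤ (p:ℤ) + P := by
        have hP0 : 0 ≤ P := by
          rw [hPdef]
          exact Int.floor_nonneg.2 (by positivity)
        omega
      have hre : (2:ℤ) ∣ ((p:ℤ) + P) := by
        rcases hev with ⟨c, hcv⟩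
        exact ⟨c, by omega⟩
      have hδd : θ = |s * (p:ℝ) - ((((p:ℤ)+P) : ℤ):ℝ)| := by
        have e : s * (p:ℝ) - ((((p:ℤ)+P) : ℤ):ℝ) = θ := by
          rw [hθdef, fract_def, hPdef, al_def]
          push_cast
          ring
        rw [e, abs_of_pos hθ0]
      have h3 := part3 p (n-p+1) (i+p+1) hp ((p:ℤ)+P) hr2 hre θ hδd (by linarith) hrun
      have hcast : ((n-p+1:ℕ):ℝ) = (n:ℝ) - p + 1 := by
        push_cast [Nat.cast_sub (show p ≤ n by omega)]
        ring
      rw [hcast] at h3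
      linarith
    · -- θ = al : p = 1, parity contradiction
      exfalso
      have hp1' : p = 1 := by
        apply fract_inj p 1
        rw [fal1, ← hθdef, hθa]
      subst hp1'
      have hP0 : P = 0 := by
        rw [hPdef]
        apply Int.floor_eq_zero_iff.2
        refine Set.mem_Ico.2 ⟨by push_cast; linarith, by push_cast; linarith⟩
      rcases hev with ⟨c, hcv⟩
      omega
    · -- T1 / T2
      exfalso
      rcases lt_trichotomy θ (1-al) with hθb | hθb | hθb
      · -- T1 : ε even, al < θ < 1-al
        have step1 : ∀ m : ℕ, i+1 ≤ m → m ≤ i+(n-p) →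
            Int.fract (al*(m:ℝ)) < 1-al := by
          intro m h1 h2
          have hu1 : Int.fract (al*(m:ℝ)) < 1 := Int.fract_lt_one _
          have hune : Int.fract (al*(m:ℝ)) ≠ 1-al := by
            intro h
            apply sum_ne_one m 1 (by omega)
            rw [fal1]; linarith
          by_contra hc
          push_neg at hc
          have hhi : 1-al < Int.fract (al*(m:ℝ)) := lt_of_le_of_ne hc (Ne.symm hune)
          have hAp := (cond1 m h1 h2).1 hhi
          rcases lt_or_ge (Int.fract (al*(m:ℝ)) + θ) 1 with hlt | hge
          · linarith
          · have hne2 : Int.fract (al*(m:ℝ)) + θ ≠ 1 := by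
              rw [hθdef]; exact sum_ne_one m p (by omega)
            have hgt : 1 < Int.fract (al*(m:ℝ)) + θ := lt_of_le_of_ne hge (Ne.symm hne2)
            have hval : Int.fract (al*((m+p:ℕ):ℝ)) = Int.fract (al*(m:ℝ)) + θ - 1 := by
              rw [e2 m, fract_eval_hi _ (by linarith) (by linarith)]
            rw [hval] at hAp
            linarith
        have step2 : ∀ m : ℕ, i+1 ≤ m → m ≤ i+(n-p) →
            Int.fract (al*(m:ℝ)) < 1-θ-al := by
          intro m h1 h2
          have hs1' := step1 m h1 h2
          have hw := w0 m h1 h2 hs1'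
          have hv : Int.fract (al*((m+1:ℕ):ℝ)) = Int.fract (al*(m:ℝ)) + al := by
            rw [e1 m, fract_eval_lo _ (by linarith [Int.fract_nonneg (al*(m:ℝ))]) (by linarith)]
          rw [hv] at hw
          linarith
        have hA := step2 (i+1) (le_refl _) (by omega)
        have hB := step2 (i+1+1) (by omega) (by omega)
        have hv : Int.fract (al*((i+1+1:ℕ):ℝ)) = Int.fract (al*((i+1:ℕ):ℝ)) + al := by
          rw [e1 (i+1), fract_eval_lo _
            (by linarith [Int.fract_nonneg (al*((i+1:ℕ):ℝ))])
            (by linarith [step1 (i+1) (le_refl _) (by omega)])]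
        have hu0 : 0 < Int.fract (al*((i+1:ℕ):ℝ)) := fract_al_pos (i+1) (by omega)
        rw [hv] at hB
        linarith
      · exact sum_ne_one p 1 (by omega) (by rw [fal1, ← hθdef]; linarith)
      · -- T2 : ε even, θ > 1-al
        have step : ∀ m : ℕ, i+1 ≤ m → m ≤ i+(n-p) →
            1-al < Int.fract (al*(m:ℝ)) := by
          intro m h1 h2
          have hu0 : 0 < Int.fract (al*(m:ℝ)) := fract_al_pos m (by omega)
          have hune : Int.fract (al*(m:ℝ)) ≠ 1-al := by
            intro h
            apply sum_ne_one m 1 (by omega)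
            rw [fal1]; linarith
          rcases lt_or_gt_of_ne hune with hlo | hhi
          · exfalso
            have hw := w0 m h1 h2 hlo
            have hv : Int.fract (al*((m+1:ℕ):ℝ)) = Int.fract (al*(m:ℝ)) + al := by
              rw [e1 m, fract_eval_lo _ (by linarith) (by linarith)]
            rw [hv] at hw
            linarith
          · exact hhi
        have hA := step (i+1) (le_refl _) (by omega)
        have hB := step (i+1+1) (by omega) (by omega)
        have hu1 : Int.fract (al*((i+1:ℕ):ℝ)) < 1 := Int.fract_lt_one _
        have hv : Int.fract (al*((i+1+1:ℕ):ℝ)) = Int.fract (al*((i+1:ℕ):ℝ)) + al - 1 := by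
          rw [e1 (i+1), fract_eval_hi _ (by linarith) (by linarith)]
        rw [hv] at hB
        linarith
  · -- ε = 1 : w = 1 : fract(al(m+1)) ≥ 1 - θ (strict)
    have w1 : ∀ m : ℕ, i+1 ≤ m → m ≤ i+(n-p) → Int.fract (al*(m:ℝ)) < 1 - al →
        1 - θ < Int.fract (al*((m+1:ℕ):ℝ)) := by
      intro m h1 h2 hfr
      have hd := cond2 m h1 h2 hfr
      have hb0 : (0:ℝ) ≤ Int.fract (al*((m+1:ℕ):ℝ)) + θ :=
        add_nonneg (Int.fract_nonneg _) hθ0.le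
      have hb1 : Int.fract (al*((m+1:ℕ):ℝ)) + θ < 2 := by
        linarith [Int.fract_lt_one (al*((m+1:ℕ):ℝ))]
      have hne : Int.fract (al*((m+1:ℕ):ℝ)) + θ ≠ 1 := sum_ne_one (m+1) p (by omega)
      by_contra hc
      push_neg at hc
      have hlt : Int.fract (al*((m+1:ℕ):ℝ)) + θ < 1 :=
        lt_of_le_of_ne (by linarith) hne
      have hw : ⌊Int.fract (al*((m+1:ℕ):ℝ)) + θ⌋ = 0 :=
        Int.floor_eq_zero_iff.2 (Set.mem_Ico.2 ⟨by linarith, hlt⟩)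
      rw [hw] at hd
      rcases hodd with ⟨c, hcv⟩
      omega
    rcases lt_trichotomy θ (1-al) with hθb | hθb | hθb
    · -- T3 / T4
      exfalso
      rcases le_or_gt θ al with hθa | hθa
      · -- T3 : ε odd, θ ≤ al
        have step : ∀ m : ℕ, i+1 ≤ m → m ≤ i+(n-p) →
            1-al < Int.fract (al*(m:ℝ)) := by
          intro m h1 h2
          have hu0 : 0 < Int.fract (al*(m:ℝ)) := fract_al_pos m (by omega)
          have hune : Int.fract (al*(m:ℝ)) ≠ 1-al := by
            intro h
            apply sum_ne_one m 1 (by omega)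
            rw [fal1]; linarith
          rcases lt_or_gt_of_ne hune with hlo | hhi
          · exfalso
            have hw := w1 m h1 h2 hlo
            have hv : Int.fract (al*((m+1:ℕ):ℝ)) = Int.fract (al*(m:ℝ)) + al := by
              rw [e1 m, fract_eval_lo _ (by linarith) (by linarith)]
            rw [hv] at hw
            -- u > 1-θ-al ; condA : c[m]=0 → c[m+p]=0
            have hnot : ¬ (1-al < Int.fract (al*((m+p:ℕ):ℝ))) := by
              intro h
              exact absurd ((cond1 m h1 h2).2 h) (not_lt.2 hlo.le)
            have hsum : Int.fract (al*(m:ℝ)) + θ < 1 := by linarith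
            have hval : Int.fract (al*((m+p:ℕ):ℝ)) = Int.fract (al*(m:ℝ)) + θ := by
              rw [e2 m, fract_eval_lo _ (by linarith) hsum]
            rw [hval] at hnot
            push_neg at hnot
            linarith
          · exact hhi
        have hA := step (i+1) (le_refl _) (by omega)
        have hB := step (i+1+1) (by omega) (by omega)
        have hu1 : Int.fract (al*((i+1:ℕ):ℝ)) < 1 := Int.fract_lt_one _
        have hv : Int.fract (al*((i+1+1:ℕ):ℝ)) = Int.fract (al*((i+1:ℕ):ℝ)) + al - 1 := by
          rw [e1 (i+1), fract_eval_hi _ (by linarith) (by linarith)]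
        rw [hv] at hB
        linarith
      · -- T4 : ε odd, al < θ < 1-al
        have dich : ∀ m : ℕ, i+1 ≤ m → m ≤ i+(n-p) →
            (1-al < Int.fract (al*(m:ℝ))) ∨
            (1-θ < Int.fract (al*(m:ℝ)) ∧ Int.fract (al*(m:ℝ)) < 1-al) := by
          intro m h1 h2
          have hu0 : 0 < Int.fract (al*(m:ℝ)) := fract_al_pos m (by omega)
          have hune : Int.fract (al*(m:ℝ)) ≠ 1-al := by
            intro h
            apply sum_ne_one m 1 (by omega)
            rw [fal1]; linarith
          rcases lt_or_gt_of_ne hune with hlo | hhi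
          · right
            refine ⟨?_, hlo⟩
            have hw := w1 m h1 h2 hlo
            have hv : Int.fract (al*((m+1:ℕ):ℝ)) = Int.fract (al*(m:ℝ)) + al := by
              rw [e1 m, fract_eval_lo _ (by linarith) (by linarith)]
            rw [hv] at hw
            have hnot : ¬ (1-al < Int.fract (al*((m+p:ℕ):ℝ))) := by
              intro h
              exact absurd ((cond1 m h1 h2).2 h) (not_lt.2 hlo.le)
            by_contra hc
            push_neg at hc
            have hne2 : Int.fract (al*(m:ℝ)) + θ ≠ 1 := by
              rw [hθdef]; exact sum_ne_one m p (by omega)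
            have hlt1 : Int.fract (al*(m:ℝ)) + θ < 1 :=
              lt_of_le_of_ne (by linarith) hne2
            have hval : Int.fract (al*((m+p:ℕ):ℝ)) = Int.fract (al*(m:ℝ)) + θ := by
              rw [e2 m, fract_eval_lo _ (by linarith) hlt1]
            rw [hval] at hnot
            push_neg at hnot
            linarith
          · left; exact hhi
        have hu0 : 0 < Int.fract (al*((i+1:ℕ):ℝ)) := fract_al_pos (i+1) (by omega)
        have hu1 : Int.fract (al*((i+1:ℕ):ℝ)) < 1 := Int.fract_lt_one _
        rcases dich (i+1) (le_refl _) (by omega) with hhi | ⟨hgt, hlo⟩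
        · -- u > 1-al : successor small, contradicts dich at i+2
          have hv : Int.fract (al*((i+1+1:ℕ):ℝ)) = Int.fract (al*((i+1:ℕ):ℝ)) + al - 1 := by
            rw [e1 (i+1), fract_eval_hi _ (by linarith) (by linarith)]
          rcases dich (i+1+1) (by omega) (by omega) with h | ⟨h, _⟩ <;> rw [hv] at h <;> linarith
        · -- u ∈ (1-θ, 1-al)
          have hv : Int.fract (al*((i+1+1:ℕ):ℝ)) = Int.fract (al*((i+1:ℕ):ℝ)) + al := by
            rw [e1 (i+1), fract_eval_lo _ (by linarith) (by linarith)]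
          have hhi2 : 1-al < Int.fract (al*((i+1+1:ℕ):ℝ)) := by
            rw [hv]; linarith
          have hAp := (cond1 (i+1+1) (by omega) (by omega)).1 hhi2
          have hsum_gt : 1 < Int.fract (al*((i+1+1:ℕ):ℝ)) + θ := by
            rw [hv]; linarith
          have hval : Int.fract (al*((i+1+1+p:ℕ):ℝ))
              = Int.fract (al*((i+1+1:ℕ):ℝ)) + θ - 1 := by
            rw [e2 (i+1+1), fract_eval_hi _ (by linarith)
              (by linarith [Int.fract_lt_one (al*((i+1+1:ℕ):ℝ))])]
          rw [hval, hv] at hAp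
          linarith
    · exact absurd (by rw [fal1, ← hθdef]; linarith)
        (sum_ne_one p 1 (by omega))
    · -- MAIN CASE M2 : ε odd, θ > 1-al
      have claimV : ∀ m : ℕ, i+1 ≤ m → m ≤ i+(n-p) →
          1 - θ < Int.fract (al*(m:ℝ)) := by
        intro m h1 h2
        have hu0 : 0 < Int.fract (al*(m:ℝ)) := fract_al_pos m (by omega)
        have hune : Int.fract (al*(m:ℝ)) + θ ≠ 1 := by
          rw [hθdef]; exact sum_ne_one m p (by omega)
        by_contra hc
        push_neg at hc
        have hlt : Int.fract (al*(m:ℝ)) < 1 - θ :=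
          lt_of_le_of_ne hc (by intro h; exact hune (by linarith))
        have hval : Int.fract (al*((m+p:ℕ):ℝ)) = Int.fract (al*(m:ℝ)) + θ := by
          rw [e2 m, fract_eval_lo _ (by linarith) (by linarith)]
        have hhi : 1-al < Int.fract (al*((m+p:ℕ):ℝ)) := by
          rw [hval]; linarith
        have := (cond1 m h1 h2).2 hhi
        linarith
      have claimW : ∀ m : ℕ, i+1 ≤ m → m ≤ i+(n-p) →
          1 - θ < Int.fract (al*((m+1:ℕ):ℝ)) := by
        intro m h1 h2
        have hu0 : 0 < Int.fract (al*(m:ℝ)) := fract_al_pos m (by omega)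
        have hu1 : Int.fract (al*(m:ℝ)) < 1 := Int.fract_lt_one _
        have hune : Int.fract (al*(m:ℝ)) ≠ 1-al := by
          intro h
          apply sum_ne_one m 1 (by omega)
          rw [fal1]; linarith
        rcases lt_or_gt_of_ne hune with hlo | hhi
        · exact w1 m h1 h2 hlo
        · -- u > 1-al : show u > 2-al-θ
          have haux : 2-al-θ < Int.fract (al*(m:ℝ)) := by
            have hne3 : Int.fract (al*(m:ℝ)) + θ + al ≠ 2 := by
              have h := sum3_ne_two m p 1 (by omega)
              rw [fal1] at h
              rw [hθdef]
              exact h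
            by_contra hc
            push_neg at hc
            have hAp := (cond1 m h1 h2).1 hhi
            have hsum_gt : 1 < Int.fract (al*(m:ℝ)) + θ := by linarith
            have hval : Int.fract (al*((m+p:ℕ):ℝ))
                = Int.fract (al*(m:ℝ)) + θ - 1 := by
              rw [e2 m, fract_eval_hi _ (by linarith) (by linarith)]
            rw [hval] at hAp
            have : Int.fract (al*(m:ℝ)) + θ + al ≠ 2 := hne3
            have hlt2 : Int.fract (al*(m:ℝ)) + θ - 1 < 1 - al := by
              rcases lt_or_eq_of_le (by linarith : Int.fract (al*(m:ℝ)) + θ - 1 ≤ 1 - al) with h | h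
              · exact h
              · exact absurd (by linarith : Int.fract (al*(m:ℝ)) + θ + al = 2) hne3
            linarith
          have hv : Int.fract (al*((m+1:ℕ):ℝ)) = Int.fract (al*(m:ℝ)) + al - 1 := by
            rw [e1 m, fract_eval_hi _ (by linarith) (by linarith)]
          rw [hv]
          linarith
      have hrun : ∀ t : ℕ, t < n - p + 1 →
          1 - θ < Int.fract (al * (((i+1) + t : ℕ):ℝ)) := by
        intro t ht
        rcases Nat.eq_zero_or_pos t with rfl | htpos
        · rw [show (i+1) + 0 = i+1 by omega]
          exact claimV (i+1) (le_refl _) (by omega)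
        · rw [show (i+1) + t = (i+t)+1 by omega]
          exact claimW (i+t) (by omega) (by omega)
      have hr2 : 2 ≤ (p:ℤ) + P + 1 := by
        have hP0 : 0 ≤ P := by
          rw [hPdef]
          exact Int.floor_nonneg.2 (by positivity)
        omega
      have hre : (2:ℤ) ∣ ((p:ℤ) + P + 1) := by
        rcases hodd with ⟨c, hcv⟩
        exact ⟨c+1, by omega⟩
      have hδd : 1 - θ = |s * (p:ℝ) - ((((p:ℤ)+P+1) : ℤ):ℝ)| := by
        have e : s * (p:ℝ) - ((((p:ℤ)+P+1) : ℤ):ℝ) = θ - 1 := by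
          rw [hθdef, fract_def, hPdef, al_def]
          push_cast
          ring
        rw [e, abs_of_neg (by linarith : θ - 1 < 0)]
        ring
      have h3 := part3 p (n-p+1) (i+1) hp ((p:ℤ)+P+1) hr2 hre (1-θ) hδd
        (by linarith) hrun
      have hcast : ((n-p+1:ℕ):ℝ) = (n:ℝ) - p + 1 := by
        push_cast [Nat.cast_sub (show p ≤ n by omega)]
        ring
      rw [hcast] at h3
      linarith

end X3P

/-- Every factor of `x₃` has exponent strictly less than `2 + √2/2`. -/
theorem x3_exponent_lt (i n p : ℕ) (hn : 1 ≤ n) (hp : 1 ≤ p)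
    (hper : ∀ j, j + p < n → x3 (i + j) = x3 (i + j + p)) :
    (n : ℝ) / (p : ℝ) < 2 + Real.sqrt 2 / 2 := by
  have hp0 : (0:ℝ) < p := by exact_mod_cast hp
  rw [div_lt_iff₀ hp0]
  have h := X3P.main i n p hp hper
  calc (n:ℝ) < (2 + X3P.s/2) * p := h
  _ = (2 + Real.sqrt 2 / 2) * p := rfl
end
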